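/- arXiv:1511.05822 — 9 statements merged into one kernel-verified Lean document; each statement's English description precedes it below -/
import Mathlib

section
/- Let C be a bounded subset of ℝ with the property that there exists α ∈ (0, 1/2) such that for every x, y ∈ C, the open interval ((x+y)/2 - α|y-x|, (x+y)/2 + α|y-x|) does not intersect C. Then C has Lebesgue measure zero. -/
/-!
The middle-gap condition is closed, so it passes to the closure `F` of `C`. The infimum `x` and
supremum `y` of a bounded piece of `F` then lie in `F`, and the gap of `x` and `y` splits the piece
into two pieces inside intervals of length `(1/2 - α) (y - x)`. After `n` rounds `C` is covered by
intervals of total length `(1 - 2α)ⁿ` times its diameter.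
-/

open MeasureTheory Set Filter Topology

def HasMiddleGaps (α : ℝ) (C : Set ℝ) : Prop :=
  ∀ x ∈ C, ∀ y ∈ C,
    Ioo ((x + y) / 2 - α * |y - x|) ((x + y) / 2 + α * |y - x|) ∩ C = ∅

namespace HasMiddleGaps

variable {α : ℝ} {C F : Set ℝ}

protected theorem closure (h : HasMiddleGaps α C) : HasMiddleGaps α (closure C) := by
  intro x hx y hy
  set G : Set (ℝ × ℝ × ℝ) :=
    {q | (q.1 + q.2.1) / 2 - α * |q.2.1 - q.1| < q.2.2} ∩
      {q | q.2.2 < (q.1 + q.2.1) / 2 + α * |q.2.1 - q.1|}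
  have hG : IsOpen G :=
    (isOpen_lt (by fun_prop) (by fun_prop)).inter (isOpen_lt (by fun_prop) (by fun_prop))
  have hCG : C ×ˢ C ×ˢ C ⊆ Gᶜ := fun q ⟨hq₁, hq₂, hq₃⟩ hqG =>
    (h _ hq₁ _ hq₂).subset ⟨hqG, hq₃⟩
  have hclosure := closure_minimal hCG hG.isClosed_compl
  rw [closure_prod_eq, closure_prod_eq] at hclosure
  exact eq_empty_of_forall_notMem fun z ⟨hzG, hz⟩ =>
    hclosure (show (x, y, z) ∈ _ from ⟨hx, hy, hz⟩) hzG

theorem Icc_inter_subset (hF : HasMiddleGaps α F) {x y : ℝ} (hx : x ∈ F) (hy : y ∈ F)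
    (hxy : x ≤ y) :
    Icc x y ∩ F ⊆
      Icc x ((x + y) / 2 - α * (y - x)) ∪ Icc ((x + y) / 2 + α * (y - x)) y := by
  rintro z ⟨⟨hxz, hzy⟩, hzF⟩
  have hgap := hF x hx y hy
  rw [abs_of_nonneg (sub_nonneg.2 hxy)] at hgap
  by_contra hz
  simp only [mem_union, mem_Icc, not_or, not_and_or, not_le] at hz
  have hzI : z ∈ Ioo ((x + y) / 2 - α * (y - x)) ((x + y) / 2 + α * (y - x)) :=
    ⟨hz.1.resolve_left hxz.not_gt, hz.2.resolve_right hzy.not_gt⟩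
  exact hgap.subset ⟨hzI, hzF⟩

theorem volume_le_pow_mul (hF : HasMiddleGaps α F) (hFc : IsClosed F) (hα : α ≤ 1 / 2)
    (n : ℕ) {T : Set ℝ} (hTF : T ⊆ F) {a b : ℝ} (hT : T ⊆ Icc a b) :
    volume T ≤ ENNReal.ofReal ((1 - 2 * α) ^ n * (b - a)) := by
  induction n generalizing T a b with
  | zero => simpa using (measure_mono hT).trans_eq Real.volume_Icc
  | succ n ih =>
    rcases T.eq_empty_or_nonempty with rfl | hne
    · simp
    have hbelow : BddBelow T := ⟨a, fun z hz => (hT hz).1⟩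
    have habove : BddAbove T := ⟨b, fun z hz => (hT hz).2⟩
    set x := sInf T
    set y := sSup T
    have hx : x ∈ F := hFc.closure_subset_iff.2 hTF (csInf_mem_closure hne hbelow)
    have hy : y ∈ F := hFc.closure_subset_iff.2 hTF (csSup_mem_closure hne habove)
    have hax : a ≤ x := le_csInf hne fun z hz => (hT hz).1
    have hyb : y ≤ b := csSup_le hne fun z hz => (hT hz).2
    have hxy : x ≤ y := (csInf_le hbelow hne.some_mem).trans (le_csSup habove hne.some_mem)
    set m₁ := (x + y) / 2 - α * (y - x)
    set m₂ := (x + y) / 2 + α * (y - x)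
    have hsplit : T ⊆ (T ∩ Icc x m₁) ∪ (T ∩ Icc m₂ y) := fun z hz =>
      (hF.Icc_inter_subset hx hy hxy ⟨⟨csInf_le hbelow hz, le_csSup habove hz⟩, hTF hz⟩).imp
        (⟨hz, ·⟩) (⟨hz, ·⟩)
    have hpiece : 0 ≤ (1 - 2 * α) ^ n * (m₁ - x) := by
      rw [show m₁ - x = (1 / 2 - α) * (y - x) by ring]
      exact mul_nonneg (pow_nonneg (by linarith) n) (mul_nonneg (by linarith) (by linarith))
    calc volume T ≤ volume (T ∩ Icc x m₁) + volume (T ∩ Icc m₂ y) :=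
          (measure_mono hsplit).trans (measure_union_le _ _)
      _ ≤ ENNReal.ofReal ((1 - 2 * α) ^ n * (m₁ - x)) +
          ENNReal.ofReal ((1 - 2 * α) ^ n * (y - m₂)) :=
          add_le_add (ih (inter_subset_left.trans hTF) inter_subset_right)
            (ih (inter_subset_left.trans hTF) inter_subset_right)
      _ = ENNReal.ofReal ((1 - 2 * α) ^ (n + 1) * (y - x)) := by
          have hm₂ : y - m₂ = m₁ - x := by ring
          rw [hm₂, ← ENNReal.ofReal_add hpiece hpiece, pow_succ]
          congr 1
          ring
      _ ≤ ENNReal.ofReal ((1 - 2 * α) ^ (n + 1) * (b - a)) :=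
          ENNReal.ofReal_le_ofReal
            (mul_le_mul_of_nonneg_left (by linarith) (pow_nonneg (by linarith) _))

end HasMiddleGaps

theorem middle_gap_implies_null (C : Set ℝ) (hC : Bornology.IsBounded C)
    (α : ℝ) (hα : α ∈ Set.Ioo (0 : ℝ) (1 / 2))
    (hgap : ∀ x ∈ C, ∀ y ∈ C,
      Set.Ioo ((x + y) / 2 - α * |y - x|) ((x + y) / 2 + α * |y - x|) ∩ C = ∅) :
    volume C = 0 := by
  obtain ⟨hα0, hα2⟩ := hα
  have hF : HasMiddleGaps α (closure C) := HasMiddleGaps.closure hgap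
  have hbound (n : ℕ) :
      volume C ≤ ENNReal.ofReal ((1 - 2 * α) ^ n * (sSup C - sInf C)) :=
    hF.volume_le_pow_mul isClosed_closure hα2.le n subset_closure hC.subset_Icc_sInf_sSup
  have hlim : Tendsto (fun n : ℕ => ENNReal.ofReal ((1 - 2 * α) ^ n * (sSup C - sInf C)))
      atTop (𝓝 0) := by
    simpa using ENNReal.tendsto_ofReal
      ((tendsto_pow_atTop_nhds_zero_of_lt_one (by linarith) (by linarith)).mul_const
        (sSup C - sInf C))
  exact nonpos_iff_eq_zero.1 (ge_of_tendsto' hlim hbound)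
end

section
/- Let n ≥ m be positive integers and k = n - m + 1. Let f : ℝⁿ → ℝᵐ be a function and N a subset of {x : limsup_{h→0} |f(x+h)-f(x)|/|h|^k < ∞} with Lebesgue measure zero in ℝⁿ. Then f(N) has Lebesgue measure zero in ℝᵐ. -/
open MeasureTheory Asymptotics Filter Set Topology
open scoped NNReal ENNReal

/-!
Stratify the points of `N` by their Hölder constant and scale: on each stratum, pieces of
diameter below the scale are `k`-Hölder, and countably many pieces cover it. A `k`-Hölder map
sends sets of `𝓗^{km}`-measure zero to sets of `𝓗^m`-measure zero, and `𝓗^{km}` is dominated by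
`𝓗^n = 𝓛ⁿ` because `km = (k - 1)(m - 1) + n ≥ n`.
-/

theorem measure_image_null_of_locally_null {α β : Type*} [TopologicalSpace α]
    [SecondCountableTopology α] [MeasurableSpace β] {μ : Measure β} {f : α → β} {s : Set α}
    (hs : ∀ x ∈ s, ∃ u ∈ 𝓝[s] x, μ (f '' u) = 0) : μ (f '' s) = 0 := by
  choose! u hxu hu₀ using hs
  obtain ⟨t, hts, htc, hst⟩ := TopologicalSpace.countable_cover_nhdsWithin hxu
  refine measure_mono_null (image_mono hst) ?_
  rw [image_iUnion₂]
  exact (measure_biUnion_null_iff htc).2 fun x hx => hu₀ x (hts hx)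

theorem holderOnWith_inter_eball {X Y : Type*} [PseudoEMetricSpace X] [PseudoEMetricSpace Y]
    {f : X → Y} {C r : ℝ≥0} {t : Set X} {ε : ℝ≥0∞}
    (ht : ∀ x ∈ t, ∀ y, edist y x < ε → edist (f y) (f x) ≤ C * edist y x ^ (r : ℝ)) (x : X) :
    HolderOnWith C r f (t ∩ Metric.eball x (ε / 2)) := by
  rintro y ⟨hyt, hy⟩ z ⟨-, hz⟩
  rw [Metric.mem_eball] at hy hz
  have hzy : edist z y < ε :=
    calc edist z y ≤ edist z x + edist y x := edist_triangle_right z y x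
      _ < ε / 2 + ε / 2 := ENNReal.add_lt_add hz hy
      _ = ε := ENNReal.add_halves ε
  rw [edist_comm y z, edist_comm (f y)]
  exact ht y hyt z hzy

section Holder

variable {X Y : Type*} [EMetricSpace X] [EMetricSpace Y] [MeasurableSpace X] [BorelSpace X]
  [MeasurableSpace Y] [BorelSpace Y] {f : X → Y} {C r : ℝ≥0} {d : ℝ}

theorem HolderOnWith.hausdorffMeasure_image_null {s : Set X} (h : HolderOnWith C r f s)
    (hr : 0 < r) (hd : 0 ≤ d) (hs : μH[r * d] s = 0) : μH[d] (f '' s) = 0 :=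
  le_antisymm ((h.hausdorffMeasure_image_le hr hd).trans_eq (by rw [hs, mul_zero])) zero_le

variable [SecondCountableTopology X]

theorem hausdorffMeasure_image_null_of_uniform_holder {t : Set X} {ε : ℝ≥0∞} (hε : 0 < ε)
    (ht : ∀ x ∈ t, ∀ y, edist y x < ε → edist (f y) (f x) ≤ C * edist y x ^ (r : ℝ))
    (hr : 0 < r) (hd : 0 ≤ d) (ht₀ : μH[r * d] t = 0) : μH[d] (f '' t) = 0 := by
  refine measure_image_null_of_locally_null fun x _ => ⟨t ∩ Metric.eball x (ε / 2), ?_, ?_⟩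
  · exact inter_mem_nhdsWithin t
      (Metric.eball_mem_nhds x (ENNReal.half_pos hε.ne'))
  · exact (holderOnWith_inter_eball ht x).hausdorffMeasure_image_null hr hd
      (measure_mono_null inter_subset_left ht₀)

theorem hausdorffMeasure_image_null_of_eventually_holder {s : Set X}
    (h : ∀ x ∈ s, ∃ C : ℝ≥0, ∀ᶠ y in 𝓝 x, edist (f y) (f x) ≤ C * edist y x ^ (r : ℝ))
    (hr : 0 < r) (hd : 0 ≤ d) (hs : μH[r * d] s = 0) : μH[d] (f '' s) = 0 := by
  set stratum : ℕ → ℕ → Set X := fun C j =>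
    {x ∈ s | ∀ y, edist y x < (j + 1 : ℝ≥0∞)⁻¹ → edist (f y) (f x) ≤ C * edist y x ^ (r : ℝ)}
  have hcover : s ⊆ ⋃ (C : ℕ) (j : ℕ), stratum C j := by
    intro x hx
    obtain ⟨C, hC⟩ := h x hx
    obtain ⟨ε, hε, hball⟩ := Metric.nhds_basis_eball.eventually_iff.1 hC
    obtain ⟨j, hj⟩ := ENNReal.exists_inv_nat_lt hε.ne'
    obtain ⟨C', hC'⟩ := exists_nat_ge C
    refine mem_iUnion₂.2 ⟨C', j, hx, fun y hy => (hball ?_).trans ?_⟩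
    · exact (hy.trans_le (ENNReal.inv_le_inv.2 (by simp))).trans hj
    · gcongr
      exact_mod_cast hC'
  refine measure_mono_null (image_mono hcover) ?_
  simp only [image_iUnion]
  refine measure_iUnion_null fun C => measure_iUnion_null fun j => ?_
  exact hausdorffMeasure_image_null_of_uniform_holder (by simp) (fun x hx => hx.2) hr hd
    (measure_mono_null (fun x hx => hx.1) hs)

end Holder

theorem exists_eventually_edist_le_of_isBigO {E F : Type*} [SeminormedAddCommGroup E]
    [SeminormedAddCommGroup F] {f : E → F} {x : E} {k : ℕ}
    (h : (fun h => f (x + h) - f x) =O[𝓝 0] fun h => ‖h‖ ^ k) :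
    ∃ C : ℝ≥0, ∀ᶠ y in 𝓝 x, edist (f y) (f x) ≤ C * edist y x ^ k := by
  obtain ⟨C, hC, hbound⟩ := h.exists_nonneg
  lift C to ℝ≥0 using hC
  have hshift : Tendsto (fun y => y - x) (𝓝 x) (𝓝 0) := by
    simpa using (continuous_sub_right x).tendsto x
  refine ⟨C, (hshift.eventually hbound.bound).mono fun y hy => ?_⟩
  simp only [add_sub_cancel, norm_pow, norm_norm] at hy
  rw [edist_nndist, edist_nndist, ← ENNReal.coe_pow, ← ENNReal.coe_mul,
    ENNReal.coe_le_coe, ← NNReal.coe_le_coe]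
  simpa [dist_eq_norm] using hy

theorem Nat.le_sub_add_one_mul {n m : ℕ} (hm : 0 < m) (hnm : m ≤ n) : n ≤ (n - m + 1) * m := by
  obtain ⟨a, rfl⟩ := Nat.exists_eq_add_of_le hnm
  rw [Nat.add_sub_cancel_left]
  nlinarith

theorem pointwise_holder_null_image
    (n m : ℕ) (hm : 0 < m) (hnm : m ≤ n) (k : ℕ) (hk : k = n - m + 1)
    (f : (Fin n → ℝ) → (Fin m → ℝ)) (N : Set (Fin n → ℝ))
    (hN : N ⊆ {x | (fun h => f (x + h) - f x) =O[nhds 0] fun h => ‖h‖ ^ k})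
    (hNnull : volume N = 0) :
    volume (f '' N) = 0 := by
  have hvolume (d : ℕ) : (μH[d] : Measure (Fin d → ℝ)) = volume := by
    simpa using hausdorffMeasure_pi_real (ι := Fin d)
  have hkm : (n : ℝ) ≤ (k : ℝ≥0) * (m : ℝ) := by
    rw [hk]
    exact_mod_cast Nat.le_sub_add_one_mul hm hnm
  rw [← hvolume] at hNnull ⊢
  refine hausdorffMeasure_image_null_of_eventually_holder (r := k)
    (fun x hx => by
      simpa [← ENNReal.rpow_natCast] using exists_eventually_edist_le_of_isBigO (hN hx))
    (by simp [hk]) m.cast_nonneg ?_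
  exact le_antisymm ((Measure.hausdorffMeasure_mono hkm N).trans hNnull.le) zero_le
end

section
/- Let n ≥ m be positive integers, k = n - m + 1, and f : ℝⁿ → ℝᵐ a function. Then the set f(A) has Lebesgue measure zero in ℝᵐ, where A = {x ∈ ℝⁿ : lim_{h→0} f(x+h)-f(x))/|h|^k = 0}, i.e. the set of points where f has a Taylor expansion of order k equal to the constant polynomial f(x). -/
/-!
For every `C > 0`, each point of the set `A` has a neighbourhood on which
`|f y - f x| ≤ C |y - x| ^ k`. On a piece of small diameter this makes `f` `C`-Hölder of
exponent `k`, so `μH[m] (f '' P) ≤ C ^ m * μH[k * m] P`; as `k * m ≥ n`, `μH[k * m] ≤ 𝓛ⁿ` on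
`ℝⁿ`, while `μH[m] = 𝓛ᵐ` on `ℝᵐ`. Summing over a countable measurable partition gives
`𝓛ᵐ (f '' (A ∩ B)) ≤ C ^ m * 𝓛ⁿ B` for every ball `B`, and `C → 0` finishes the proof.
-/

open MeasureTheory Asymptotics Filter Set Function
open scoped NNReal ENNReal Topology

theorem MeasureTheory.Measure.tsum_measure_inter_le {α ι : Type*} [MeasurableSpace α] [Countable ι]
    (μ : Measure α) (s : Set α) {D : ι → Set α} (hD : ∀ i, MeasurableSet (D i))
    (hdisj : Pairwise (Disjoint on D)) : ∑' i, μ (s ∩ D i) ≤ μ s :=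
  calc ∑' i, μ (s ∩ D i) ≤ ∑' i, μ (toMeasurable μ s ∩ D i) :=
        ENNReal.tsum_le_tsum fun _ =>
          measure_mono (inter_subset_inter_left _ (subset_toMeasurable μ s))
    _ ≤ μ (⋃ i, toMeasurable μ s ∩ D i) :=
        tsum_meas_le_meas_iUnion_of_disjoint μ
          (fun i => (measurableSet_toMeasurable μ s).inter (hD i))
          fun _ _ hij => (hdisj hij).mono inter_subset_right inter_subset_right
    _ ≤ μ s := (measure_mono (iUnion_subset fun _ => inter_subset_left)).trans_eq
        (measure_toMeasurable s)

theorem exists_measurable_partition_ediam_le {X : Type*} [EMetricSpace X]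
    [TopologicalSpace.SeparableSpace X] [MeasurableSpace X] [OpensMeasurableSpace X]
    {δ : ℝ≥0∞} (hδ : 0 < δ) :
    ∃ D : ℕ → Set X, (∀ i, MeasurableSet (D i)) ∧ Pairwise (Disjoint on D) ∧
      ⋃ i, D i = univ ∧ ∀ i, ∀ x ∈ D i, ∀ y ∈ D i, edist x y ≤ δ := by
  rcases isEmpty_or_nonempty X with hX | hX
  · exact ⟨fun _ => ∅, fun _ => MeasurableSet.empty, fun _ _ _ => disjoint_empty _,
      eq_univ_of_forall isEmptyElim, fun _ _ h => h.elim⟩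
  obtain ⟨u, hu⟩ := TopologicalSpace.exists_dense_seq X
  set B : ℕ → Set X := fun i => Metric.closedEBall (u i) (δ / 2)
  have hB : ⋃ i, B i = univ := by
    refine eq_univ_of_forall fun x => ?_
    obtain ⟨_, ⟨i, rfl⟩, hi⟩ := EMetric.mem_closure_iff.1 (hu x) (δ / 2) (ENNReal.half_pos hδ.ne')
    exact mem_iUnion.2 ⟨i, Metric.mem_closedEBall.2 hi.le⟩
  refine ⟨disjointed B, MeasurableSet.disjointed fun i => Metric.isClosed_closedEBall.measurableSet,
    disjoint_disjointed B, iUnion_disjointed.trans hB, fun i x hx y hy => ?_⟩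
  calc edist x y ≤ edist x (u i) + edist (u i) y := edist_triangle _ _ _
    _ ≤ δ / 2 + δ / 2 := add_le_add (disjointed_subset B i hx)
        (by rw [edist_comm]; exact disjointed_subset B i hy)
    _ = δ := ENNReal.add_halves δ

theorem hausdorffMeasure_image_le_of_forall_edist_le {X Y : Type*} [EMetricSpace X]
    [TopologicalSpace.SeparableSpace X] [MeasurableSpace X] [BorelSpace X] [EMetricSpace Y]
    [MeasurableSpace Y] [BorelSpace Y] {f : X → Y} {s : Set X} {C r : ℝ≥0} {δ : ℝ≥0∞}
    (hr : 0 < r) (hδ : 0 < δ)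
    (hf : ∀ x ∈ s, ∀ y ∈ s, edist x y ≤ δ → edist (f x) (f y) ≤ C * edist x y ^ (r : ℝ))
    {d : ℝ} (hd : 0 ≤ d) : μH[d] (f '' s) ≤ (C : ℝ≥0∞) ^ d * μH[r * d] s := by
  obtain ⟨D, hDm, hDdisj, hDcover, hDdiam⟩ := exists_measurable_partition_ediam_le (X := X) hδ
  have hs : s = ⋃ i, s ∩ D i := by rw [← inter_iUnion, hDcover, inter_univ]
  calc μH[d] (f '' s) = μH[d] (⋃ i, f '' (s ∩ D i)) := by rw [← image_iUnion, ← hs]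
    _ ≤ ∑' i, μH[d] (f '' (s ∩ D i)) := measure_iUnion_le _
    _ ≤ ∑' i, (C : ℝ≥0∞) ^ d * μH[r * d] (s ∩ D i) := ENNReal.tsum_le_tsum fun i =>
        HolderOnWith.hausdorffMeasure_image_le
          (fun x hx y hy => hf x hx.1 y hy.1 (hDdiam i x hx.2 y hy.2)) hr hd
    _ = (C : ℝ≥0∞) ^ d * ∑' i, μH[r * d] (s ∩ D i) := ENNReal.tsum_mul_left
    _ ≤ (C : ℝ≥0∞) ^ d * μH[r * d] s :=
        mul_le_mul_right (Measure.tsum_measure_inter_le _ s hDm hDdisj) _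

theorem hausdorffMeasure_pi_fin_le_volume {n : ℕ} {d : ℝ} (hd : n ≤ d) (s : Set (Fin n → ℝ)) :
    μH[d] s ≤ volume s := by
  rcases hd.eq_or_lt with rfl | hlt
  · have := hausdorffMeasure_pi_real (ι := Fin n)
    rw [Fintype.card_fin] at this
    rw [this]
  · lift d to ℝ≥0 using (Nat.cast_nonneg n).trans hd
    have hdim : dimH s < d :=
      (dimH_mono (subset_univ s)).trans_lt
        ((Real.dimH_univ_pi_fin n).trans_lt (by exact_mod_cast hlt))
    rw [hausdorffMeasure_of_dimH_lt hdim]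
    exact zero_le

theorem volume_image_le_of_forall_edist_le {n m k : ℕ} (hk : 0 < k) (hnkm : n ≤ k * m)
    {f : (Fin n → ℝ) → (Fin m → ℝ)} {s : Set (Fin n → ℝ)} {C : ℝ≥0} {δ : ℝ≥0∞} (hδ : 0 < δ)
    (hf : ∀ x ∈ s, ∀ y ∈ s, edist x y ≤ δ → edist (f x) (f y) ≤ C * edist x y ^ k) :
    volume (f '' s) ≤ (C : ℝ≥0∞) ^ m * volume s := by
  have hvol : (μH[m] : Measure (Fin m → ℝ)) = volume := by
    simpa using hausdorffMeasure_pi_real (ι := Fin m)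
  have himage := hausdorffMeasure_image_le_of_forall_edist_le (r := k) (by exact_mod_cast hk) hδ
    (by simpa only [NNReal.coe_natCast, ENNReal.rpow_natCast] using hf) (Nat.cast_nonneg m)
  rw [hvol, ENNReal.rpow_natCast, NNReal.coe_natCast] at himage
  exact himage.trans
    (mul_le_mul_right (hausdorffMeasure_pi_fin_le_volume (by exact_mod_cast hnkm) s) _)

def flatPoints {X Y : Type*} [PseudoMetricSpace X] [PseudoMetricSpace Y] (f : X → Y) (k : ℕ)
    (C δ : ℝ) : Set X :=
  {x | ∀ y, dist x y ≤ δ → dist (f x) (f y) ≤ C * dist x y ^ k}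

theorem flatPoints_anti {X Y : Type*} [PseudoMetricSpace X] [PseudoMetricSpace Y] (f : X → Y)
    (k : ℕ) (C : ℝ) {δ δ' : ℝ} (h : δ ≤ δ') : flatPoints f k C δ' ⊆ flatPoints f k C δ :=
  fun _ hx y hy => hx y (hy.trans h)

theorem exists_pos_mem_flatPoints_of_isLittleO {E F : Type*} [SeminormedAddCommGroup E]
    [SeminormedAddCommGroup F] {f : E → F} {k : ℕ} {x : E}
    (hx : (fun h => f (x + h) - f x) =o[𝓝 0] fun h => ‖h‖ ^ k) {C : ℝ} (hC : 0 < C) :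
    ∃ δ > 0, x ∈ flatPoints f k C δ := by
  obtain ⟨ε, hε, hball⟩ := Metric.eventually_nhds_iff.1 (hx.def hC)
  refine ⟨ε / 2, half_pos hε, fun y hy => ?_⟩
  have hyx : dist (y - x) 0 < ε := by
    rw [dist_zero_right, ← dist_eq_norm, dist_comm]; linarith
  simpa [add_sub_cancel, dist_eq_norm, norm_sub_rev y x, norm_sub_rev (f y) (f x)] using hball hyx

theorem volume_image_flatPoints_inter_le {n m k : ℕ} (hk : 0 < k) (hnkm : n ≤ k * m)
    (f : (Fin n → ℝ) → (Fin m → ℝ)) (C : ℝ≥0) {δ : ℝ} (hδ : 0 < δ) (s : Set (Fin n → ℝ)) :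
    volume (f '' (flatPoints f k C δ ∩ s)) ≤ (C : ℝ≥0∞) ^ m * volume s := by
  refine (volume_image_le_of_forall_edist_le hk hnkm (ENNReal.ofReal_pos.2 hδ)
    fun x hx y _ hxy => ?_).trans (by gcongr; exact inter_subset_right)
  rw [edist_dist, ENNReal.ofReal_le_ofReal_iff hδ.le] at hxy
  rw [edist_dist, edist_dist, ← ENNReal.ofReal_pow dist_nonneg, ← ENNReal.ofReal_coe_nnreal,
    ← ENNReal.ofReal_mul C.coe_nonneg]
  exact ENNReal.ofReal_le_ofReal (hx.1 y hxy)

theorem ENNReal.eq_zero_of_forall_le_pow_mul {a b : ℝ≥0∞} {m : ℕ} (hm : m ≠ 0) (hb : b ≠ ∞)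
    (h : ∀ C : ℝ≥0, 0 < C → a ≤ C ^ m * b) : a = 0 := by
  have hlim : Tendsto (fun C : ℝ≥0 => (C : ℝ≥0∞) ^ m * b) (𝓝[>] 0) (𝓝 0) := by
    have := ENNReal.Tendsto.mul_const
      ((ENNReal.continuous_pow m).tendsto 0 |>.comp (ENNReal.continuous_coe.tendsto 0)) (Or.inr hb)
    simpa [zero_pow hm] using this.mono_left nhdsWithin_le_nhds
  exact nonpos_iff_eq_zero.1 (ge_of_tendsto hlim (eventually_nhdsWithin_of_forall h))

theorem volume_image_isLittleO_inter_le {n m k : ℕ} (hk : 0 < k) (hnkm : n ≤ k * m)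
    (f : (Fin n → ℝ) → (Fin m → ℝ)) {C : ℝ≥0} (hC : 0 < C) (s : Set (Fin n → ℝ)) :
    volume (f '' ({x | (fun h => f (x + h) - f x) =o[𝓝 0] fun h => ‖h‖ ^ k} ∩ s)) ≤
      (C : ℝ≥0∞) ^ m * volume s := by
  set F : ℕ → Set (Fin m → ℝ) := fun j => f '' (flatPoints f k C (1 / (j + 1)) ∩ s)
  have hF : Monotone F := fun i j hij =>
    image_mono (inter_subset_inter_left _ (flatPoints_anti f k C (by gcongr)))
  have hcover : f '' ({x | (fun h => f (x + h) - f x) =o[𝓝 0] fun h => ‖h‖ ^ k} ∩ s) ⊆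
      ⋃ j, F j := by
    rintro _ ⟨x, ⟨hx, hxs⟩, rfl⟩
    obtain ⟨δ, hδ, hxδ⟩ := exists_pos_mem_flatPoints_of_isLittleO hx (C := C) hC
    obtain ⟨j, hj⟩ := exists_nat_one_div_lt hδ
    exact mem_iUnion.2 ⟨j, x, ⟨flatPoints_anti f k C hj.le hxδ, hxs⟩, rfl⟩
  calc _ ≤ volume (⋃ j, F j) := measure_mono hcover
    _ = ⨆ j, volume (F j) := hF.measure_iUnion
    _ ≤ _ := iSup_le fun j => volume_image_flatPoints_inter_le hk hnkm f C (by positivity) s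

theorem zero_jet_points_null_image_general
    (n m : ℕ) (hm : 0 < m) (k : ℕ) (hk : k = n - m + 1)
    (f : (Fin n → ℝ) → (Fin m → ℝ)) :
    volume (f '' {x | (fun h => f (x + h) - f x) =o[nhds 0] fun h => ‖h‖ ^ k}) = 0 := by
  set A := {x | (fun h => f (x + h) - f x) =o[nhds 0] fun h => ‖h‖ ^ k}
  have hnkm : n ≤ k * m := by
    have : n - m ≤ (n - m) * m := Nat.le_mul_of_pos_right _ hm
    rw [hk, add_mul, one_mul]; omega
  have hball : ∀ R : ℕ, volume (f '' (A ∩ Metric.closedBall 0 R)) = 0 := fun R =>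
    ENNReal.eq_zero_of_forall_le_pow_mul hm.ne' measure_closedBall_lt_top.ne fun _ hC =>
      volume_image_isLittleO_inter_le (by omega) hnkm f hC _
  rw [← inter_univ A, ← Metric.iUnion_closedBall_nat 0, inter_iUnion, image_iUnion]
  exact measure_iUnion_null hball

theorem zero_jet_points_null_image
    (n m : ℕ) (hm : 0 < m) (hnm : m ≤ n) (k : ℕ) (hk : k = n - m + 1)
    (f : (Fin n → ℝ) → (Fin m → ℝ)) :
    volume (f '' {x | (fun h => f (x + h) - f x) =o[nhds 0] fun h => ‖h‖ ^ k}) = 0 :=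
  zero_jet_points_null_image_general n m hm k hk f
end

section
/- Let I be a bounded interval in ℝ, k ≥ 3 an odd positive integer, c, ε > 0 with 2ε < c, φ : I → ℝ a function, and D ⊆ I. Suppose φ(y) ≥ φ(x) + c(y-x)^k - ε|y-x|^k for every x, y ∈ D. Then D has Lebesgue measure zero. -/
/-!
Comparing the growth condition along the cycle `x → z → y → x` for `x < y < z` in `D` gives
`(c - ε) (z - x)^k ≤ (c + ε) ((y - x)^k + (z - y)^k)`, where oddness of `k` turns the backward
steps into upper bounds. If `y` were within `(z - x)/20` of the midpoint of `[x, z]`, both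
summands would be below `(11/20)^k (z - x)^k`, and `k ≥ 3`, `2ε < c` make this impossible.
So `D` is porous: between any two of its points there is a gap of proportional size around the
midpoint. Removing that gap from the smallest interval containing a compact piece of the closure
of `D` leaves two intervals of total length `9/10` of it, and iterating shows that `D` is null.
-/

open MeasureTheory Set Filter Topology

/-- The condition is vacuous for `z < x`; stated without an order hypothesis on `x, z` it is
closed in `(x, z, y)`, so it passes to the closure. -/
def MidpointPorous (κ : ℝ) (S : Set ℝ) : Prop :=
  ∀ x ∈ S, ∀ z ∈ S, ∀ y ∈ S, κ * (z - x) ≤ |y - (x + z) / 2|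

namespace MidpointPorous

variable {κ : ℝ} {S : Set ℝ}

theorem closure (hS : MidpointPorous κ S) : MidpointPorous κ (closure S) := by
  let T : Set (ℝ × ℝ × ℝ) := {p | κ * (p.2.1 - p.1) ≤ |p.2.2 - (p.1 + p.2.1) / 2|}
  have hT : IsClosed T := isClosed_le (by fun_prop) (by fun_prop)
  have hST : S ×ˢ S ×ˢ S ⊆ T := fun p ⟨hx, hz, hy⟩ => hS _ hx _ hz _ hy
  have hcl := closure_minimal hST hT
  rw [closure_prod_eq, closure_prod_eq] at hcl
  exact fun x hx z hz y hy => @hcl (x, z, y) ⟨hx, hz, hy⟩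

theorem volume_inter_Icc_le (hS : MidpointPorous κ S) (hSc : IsClosed S) (hκ : κ ≤ 1 / 2)
    (n : ℕ) (u v : ℝ) :
    volume (S ∩ Icc u v) ≤ ENNReal.ofReal ((1 - 2 * κ) ^ n * (v - u)) := by
  induction n generalizing u v with
  | zero => simpa using measure_mono (μ := volume) (inter_subset_right (s := S) (t := Icc u v))
  | succ n ih =>
    have hK : IsCompact (S ∩ Icc u v) := isCompact_Icc.inter_left hSc
    rcases (S ∩ Icc u v).eq_empty_or_nonempty with hempty | hne
    · simp [hempty]
    obtain ⟨x, hxK, hxmin⟩ := hK.exists_isLeast hne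
    obtain ⟨z, hzK, hzmax⟩ := hK.exists_isGreatest hne
    have hxz : x ≤ z := hxmin hzK
    set r := (1 - 2 * κ) * (z - x) / 2 with hr
    have hsplit : S ∩ Icc u v ⊆ S ∩ Icc x (x + r) ∪ S ∩ Icc (z - r) z := by
      intro y hy
      rcases le_abs'.mp (hS x hxK.1 z hzK.1 y hy.1) with h | h
      · exact Or.inl ⟨hy.1, hxmin hy, by linarith⟩
      · exact Or.inr ⟨hy.1, by linarith, hzmax hy⟩
    have hq : 0 ≤ 1 - 2 * κ := by linarith
    have hpiece : 0 ≤ (1 - 2 * κ) ^ n * r := by positivity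
    calc volume (S ∩ Icc u v)
        ≤ volume (S ∩ Icc x (x + r)) + volume (S ∩ Icc (z - r) z) :=
          (measure_mono hsplit).trans (measure_union_le _ _)
      _ ≤ ENNReal.ofReal ((1 - 2 * κ) ^ n * (x + r - x)) +
            ENNReal.ofReal ((1 - 2 * κ) ^ n * (z - (z - r))) := add_le_add (ih _ _) (ih _ _)
      _ = ENNReal.ofReal ((1 - 2 * κ) ^ (n + 1) * (z - x)) := by
          rw [← ENNReal.ofReal_add (by simpa using hpiece) (by simpa using hpiece), hr]
          ring_nf
      _ ≤ ENNReal.ofReal ((1 - 2 * κ) ^ (n + 1) * (v - u)) := by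
          gcongr
          exacts [hzK.2.2, hxK.2.1]

theorem volume_eq_zero (hS : MidpointPorous κ S) (hκ : 0 < κ) (hκ' : κ ≤ 1 / 2) :
    volume S = 0 := by
  have hbox (u v : ℝ) : volume (S ∩ Icc u v) = 0 := by
    have htend :
        Tendsto (fun n : ℕ => ENNReal.ofReal ((1 - 2 * κ) ^ n * (v - u))) atTop (𝓝 0) := by
      simpa using ENNReal.tendsto_ofReal
        ((tendsto_pow_atTop_nhds_zero_of_lt_one (by linarith) (by linarith)).mul_const (v - u))
    refine measure_mono_null (inter_subset_inter_left _ subset_closure) (nonpos_iff_eq_zero.1 ?_)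
    exact ge_of_tendsto' htend fun n => hS.closure.volume_inter_Icc_le isClosed_closure hκ' n u v
  refine measure_mono_null (fun y hy => ?_) (measure_iUnion_null fun n : ℕ => hbox (-n) n)
  obtain ⟨n, hn⟩ := exists_nat_ge |y|
  exact mem_iUnion.2 ⟨n, hy, abs_le.1 hn⟩

end MidpointPorous

section PowGrowth

variable {k : ℕ} {c ε : ℝ} {φ : ℝ → ℝ} {D : Set ℝ}

theorem sub_bounds_of_powGrowth (hkodd : Odd k)
    (hyp : ∀ x ∈ D, ∀ y ∈ D, φ x + c * (y - x) ^ k - ε * |y - x| ^ k ≤ φ y)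
    {x y : ℝ} (hx : x ∈ D) (hy : y ∈ D) (hxy : x ≤ y) :
    (c - ε) * (y - x) ^ k ≤ φ y - φ x ∧ φ y - φ x ≤ (c + ε) * (y - x) ^ k := by
  have hforward := hyp x hx y hy
  have hbackward := hyp y hy x hx
  rw [abs_of_nonneg (sub_nonneg.2 hxy)] at hforward
  rw [abs_sub_comm, abs_of_nonneg (sub_nonneg.2 hxy), ← neg_sub y x, hkodd.neg_pow] at hbackward
  constructor <;> linarith

theorem add_pow_lt_of_lt_eleven_twentieths (hk3 : 3 ≤ k) (hε : 0 ≤ ε) (hεc : 2 * ε < c)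
    {a b d : ℝ} (ha : 0 ≤ a) (hb : 0 ≤ b) (had : a < 11 / 20 * d) (hbd : b < 11 / 20 * d) :
    (c + ε) * (a ^ k + b ^ k) < (c - ε) * d ^ k := by
  have hd : 0 < d := by linarith
  have hq : ((11 : ℝ) / 20) ^ k ≤ (11 / 20) ^ 3 :=
    pow_le_pow_of_le_one (by norm_num) (by norm_num) hk3
  have hsum : a ^ k + b ^ k < 2 * (11 / 20) ^ k * d ^ k := by
    have := pow_lt_pow_left₀ had ha (by omega : k ≠ 0)
    have := pow_lt_pow_left₀ hbd hb (by omega : k ≠ 0)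
    rw [mul_pow] at *
    linarith
  have hdk : 0 < d ^ k := pow_pos hd k
  calc (c + ε) * (a ^ k + b ^ k) < (c + ε) * (2 * (11 / 20) ^ k * d ^ k) :=
        mul_lt_mul_of_pos_left hsum (by linarith)
    _ ≤ (c + ε) * (2 * (11 / 20) ^ 3 * d ^ k) := by gcongr; linarith
    -- `2 (11/20)^3 < 1/3`, and `(c + ε) / 3 < c - ε` because `2ε < c`
    _ ≤ (c - ε) * d ^ k := by nlinarith

theorem midpointPorous_of_powGrowth (hk3 : 3 ≤ k) (hkodd : Odd k) (hε : 0 ≤ ε)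
    (hεc : 2 * ε < c)
    (hyp : ∀ x ∈ D, ∀ y ∈ D, φ x + c * (y - x) ^ k - ε * |y - x| ^ k ≤ φ y) :
    MidpointPorous (1 / 20) D := by
  intro x hx z hz y hy
  by_contra! hnear
  obtain ⟨hlo, hhi⟩ := abs_lt.1 hnear
  have hxz : x ≤ z := by linarith
  have hxy : x ≤ y := by linarith
  have hyz : y ≤ z := by linarith
  have hxz_growth := (sub_bounds_of_powGrowth hkodd hyp hx hz hxz).1
  have hxy_growth := (sub_bounds_of_powGrowth hkodd hyp hx hy hxy).2
  have hyz_growth := (sub_bounds_of_powGrowth hkodd hyp hy hz hyz).2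
  have := add_pow_lt_of_lt_eleven_twentieths hk3 hε hεc (sub_nonneg.2 hxy) (sub_nonneg.2 hyz)
    (d := z - x) (by linarith) (by linarith)
  linarith

end PowGrowth

theorem odd_power_growth_null_general
    (k : ℕ) (hk3 : 3 ≤ k) (hkodd : Odd k)
    (c ε : ℝ) (hε : 0 < ε) (hεc : 2 * ε < c)
    (φ : ℝ → ℝ) (D : Set ℝ)
    (hyp : ∀ x ∈ D, ∀ y ∈ D, φ x + c * (y - x) ^ k - ε * |y - x| ^ k ≤ φ y) :
    volume D = 0 :=
  (midpointPorous_of_powGrowth hk3 hkodd hε.le hεc hyp).volume_eq_zero (by norm_num) (by norm_num)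

theorem odd_power_growth_null
    (I : Set ℝ) (hIint : I.OrdConnected) (hIbd : Bornology.IsBounded I)
    (k : ℕ) (hk3 : 3 ≤ k) (hkodd : Odd k)
    (c ε : ℝ) (hc : 0 < c) (hε : 0 < ε) (hεc : 2 * ε < c)
    (φ : ℝ → ℝ) (D : Set ℝ) (hD : D ⊆ I)
    (hyp : ∀ x ∈ D, ∀ y ∈ D, φ x + c * (y - x) ^ k - ε * |y - x| ^ k ≤ φ y) :
    volume D = 0 :=
  odd_power_growth_null_general k hk3 hkodd c ε hε hεc φ D hyp
end

section
/- Let φ : ℝ → ℝ be a function and k ≥ 2 an even integer. Then the set G = {t ∈ ℝ : there exists a_t > 0 such that φ(t+h) - φ(t) - a_t h^k = o(|h|^k) as h → 0} is countable. -/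
open MeasureTheory Asymptotics Filter

theorem even_positive_leading_jet_countable
    (φ : ℝ → ℝ) (k : ℕ) (hk : 2 ≤ k) (hkeven : Even k) :
    Set.Countable {t : ℝ | ∃ a : ℝ, 0 < a ∧
      (fun h => φ (t + h) - φ t - a * h ^ k) =o[nhds 0] fun h => |h| ^ k} := by
  set T : ℚ × ℚ → Set ℝ := fun p =>
    {t | t ∈ Set.Ioo (p.1 : ℝ) p.2 ∧ ∀ s ∈ Set.Ioo (p.1 : ℝ) p.2, s ≠ t → φ t < φ s} with hT
  have hsub : {t : ℝ | ∃ a : ℝ, 0 < a ∧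
      (fun h => φ (t + h) - φ t - a * h ^ k) =o[nhds 0] fun h => |h| ^ k}
      ⊆ ⋃ p : ℚ × ℚ, T p := by
    rintro t ⟨a, ha, ho⟩
    -- strict local min: eventually for h ≠ 0, φ (t+h) > φ t
    have h2 := (ho.def (by positivity : (0:ℝ) < a / 2))
    rw [Metric.eventually_nhds_iff] at h2
    obtain ⟨ε, hε, hball⟩ := h2
    -- pick rationals q ∈ (t - ε, t), r ∈ (t, t + ε)
    obtain ⟨q, hq1, hq2⟩ := exists_rat_btwn (show t - ε < t by linarith)
    obtain ⟨r, hr1, hr2⟩ := exists_rat_btwn (show t < t + ε by linarith)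
    refine Set.mem_iUnion.2 ⟨(q, r), ⟨hq2, hr1⟩, fun s hs hst => ?_⟩
    have hdist : dist (s - t) 0 < ε := by
      simp only [dist_zero_right, Real.norm_eq_abs]
      rw [abs_lt]
      constructor <;> [nlinarith [hs.1]; nlinarith [hs.2]]
    have := hball hdist
    simp only [add_sub_cancel, Real.norm_eq_abs] at this
    have hne : s - t ≠ 0 := sub_ne_zero.2 hst
    have habs : 0 < |s - t| := abs_pos.2 hne
    have hpow : (s - t) ^ k = |s - t| ^ k := (hkeven.pow_abs (s - t)).symm
    have hpowpos : 0 < |s - t| ^ k := pow_pos habs k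
    have h1 : |φ s - φ t - a * (s - t) ^ k| ≤ a / 2 * |s - t| ^ k := by
      rwa [abs_pow, abs_abs] at this
    nlinarith [neg_le_of_abs_le h1, hpow, hpowpos, mul_pos ha hpowpos]
  refine (Set.countable_iUnion fun p => ?_).mono hsub
  apply Set.Subsingleton.countable
  rintro x ⟨hx1, hx2⟩ y ⟨hy1, hy2⟩
  by_contra hxy
  exact absurd (hx2 y hy1 (Ne.symm hxy)) (not_lt.2 (hy2 x hx1 hxy).le)
end

section
/- Let φ : ℝ → ℝ be a function and k ≥ 3 an odd integer. Then the set G = {t ∈ ℝ : there exists a_t > 0 such that φ(t+h) - φ(t) - a_t h^k = o(|h|^k) as h → 0} has Lebesgue measure zero. -/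
open MeasureTheory Asymptotics Filter

/-- Two points carrying an odd-order positive jet with comparable coefficients and
uniform error bounds cannot be too close. -/
private lemma sep_aux (φ : ℝ → ℝ) (k : ℕ) (hk : 3 ≤ k) (hkodd : Odd k)
    (α ε t s a b : ℝ) (hα : 0 < α)
    (hat : α ≤ a) (ha2 : a ≤ 2 * α) (hbt : α ≤ b) (hb2 : b ≤ 2 * α)
    (hta : ∀ h : ℝ, |h| ≤ ε → |φ (t + h) - φ t - a * h ^ k| ≤ α / 8 * |h| ^ k)
    (hsb : ∀ h : ℝ, |h| ≤ ε → |φ (s + h) - φ s - b * h ^ k| ≤ α / 8 * |h| ^ k)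
    (hts : t < s) (hle : s - t ≤ ε) : False := by
  have hpos : 0 < s - t := by linarith
  have habs : |s - t| = s - t := abs_of_pos hpos
  have habs2 : |(s - t) / 2| = (s - t) / 2 := abs_of_pos (by linarith)
  have habs2' : |(-((s - t) / 2))| = (s - t) / 2 := by rw [abs_neg, habs2]
  have e3 := hta (s - t) (by rw [habs]; exact hle)
  have e1 := hta ((s - t) / 2) (by rw [habs2]; linarith)
  have e2 := hsb (-((s - t) / 2)) (by rw [habs2']; linarith)
  rw [habs] at e3
  rw [habs2] at e1
  rw [habs2'] at e2
  have hne : (-((s - t) / 2)) ^ k = -(((s - t) / 2) ^ k) := hkodd.neg_pow _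
  rw [hne] at e2
  have hst : t + (s - t) = s := by ring
  have hm : s + -((s - t) / 2) = t + (s - t) / 2 := by ring
  rw [hst] at e3
  rw [hm] at e2
  set H := (s - t) ^ k with hH
  set Q := ((s - t) / 2) ^ k with hQdef
  have hHpos : 0 < H := pow_pos hpos k
  have hQpos : 0 < Q := pow_pos (by linarith) k
  have h2k : (8 : ℝ) ≤ 2 ^ k := by
    calc (8 : ℝ) = 2 ^ 3 := by norm_num
    _ ≤ 2 ^ k := pow_le_pow_right₀ (by norm_num) hk
  have hQH : Q = H / 2 ^ k := by rw [hQdef, hH, div_pow]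
  have hQle : Q ≤ H / 8 := by
    rw [hQH]
    exact div_le_div_of_nonneg_left hHpos.le (by norm_num) h2k
  have h1 : α * H ≤ a * H := mul_le_mul_of_nonneg_right hat hHpos.le
  have h2 : (a + b) * Q ≤ 4 * α * (H / 8) :=
    mul_le_mul (by linarith) hQle hQpos.le (by linarith)
  have h3 : α * Q ≤ α * (H / 8) := mul_le_mul_of_nonneg_left hQle hα.le
  have hαH : 0 < α * H := mul_pos hα hHpos
  obtain ⟨e1l, e1r⟩ := abs_le.mp e1
  obtain ⟨e2l, e2r⟩ := abs_le.mp e2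
  obtain ⟨e3l, e3r⟩ := abs_le.mp e3
  nlinarith [e1l, e1r, e2l, e2r, e3l, e3r, h1, h2, h3, hαH]

private def Eset (φ : ℝ → ℝ) (k : ℕ) (q : ℚ) (n : ℕ) : Set ℝ :=
  {t | 0 < (q : ℝ) ∧ ∃ a : ℝ, (q : ℝ) ≤ a ∧ a ≤ 2 * (q : ℝ) ∧
    ∀ h : ℝ, |h| ≤ 1 / ((n : ℝ) + 1) →
      |φ (t + h) - φ t - a * h ^ k| ≤ (q : ℝ) / 8 * |h| ^ k}

private lemma Eset_countable (φ : ℝ → ℝ) (k : ℕ) (hk : 3 ≤ k) (hkodd : Odd k)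
    (q : ℚ) (n : ℕ) : (Eset φ k q n).Countable := by
  have hsep : ∀ t ∈ Eset φ k q n, ∀ s ∈ Eset φ k q n, t < s → 1 / ((n : ℝ) + 1) < s - t := by
    intro t ht s hs hts
    by_contra hcon
    push_neg at hcon
    obtain ⟨hq0, a, ha1, ha2, hta⟩ := ht
    obtain ⟨-, b, hb1, hb2, hsb⟩ := hs
    exact sep_aux φ k hk hkodd q (1 / ((n : ℝ) + 1)) t s a b hq0 ha1 ha2 hb1 hb2 hta hsb hts hcon
  have hinj : Set.InjOn (fun t : ℝ => ⌊t * ((n : ℝ) + 1)⌋) (Eset φ k q n) := by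
    intro t ht s hs hfl
    by_contra hne
    have hlt : ∀ x ∈ Eset φ k q n, ∀ y ∈ Eset φ k q n,
        (⌊x * ((n : ℝ) + 1)⌋ = ⌊y * ((n : ℝ) + 1)⌋) → x < y → False := by
      intro x hx y hy hfl' hxy
      have hd := hsep x hx y hy hxy
      have habs : |x * ((n : ℝ) + 1) - y * ((n : ℝ) + 1)| < 1 :=
        Int.abs_sub_lt_one_of_floor_eq_floor hfl'
      have hn1 : (0 : ℝ) < (n : ℝ) + 1 := by positivity
      have : (y - x) * ((n : ℝ) + 1) < 1 := by
        have := abs_lt.mp habs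
        nlinarith [this.1, this.2]
      have : y - x < 1 / ((n : ℝ) + 1) := by
        rw [lt_div_iff₀ hn1]; linarith
      linarith
    rcases lt_or_gt_of_ne hne with h | h
    · exact hlt t ht s hs hfl h
    · exact hlt s hs t ht hfl.symm h
  have : Function.Injective (fun x : (Eset φ k q n) => ⌊(x : ℝ) * ((n : ℝ) + 1)⌋) := by
    intro x y hxy
    exact Subtype.ext (hinj x.2 y.2 hxy)
  exact Set.countable_coe_iff.mp this.countable

theorem odd_positive_leading_jet_null
    (φ : ℝ → ℝ) (k : ℕ) (hk : 3 ≤ k) (hkodd : Odd k) :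
    volume {t : ℝ | ∃ a : ℝ, 0 < a ∧
      (fun h => φ (t + h) - φ t - a * h ^ k) =o[nhds 0] fun h => |h| ^ k} = 0 := by
  have hsub : {t : ℝ | ∃ a : ℝ, 0 < a ∧
      (fun h => φ (t + h) - φ t - a * h ^ k) =o[nhds 0] fun h => |h| ^ k} ⊆
      ⋃ (q : ℚ) (n : ℕ), Eset φ k q n := by
    intro t ht
    obtain ⟨a, ha, hlo⟩ := ht
    obtain ⟨q, hq1, hq2⟩ := exists_rat_btwn (half_lt_self ha)
    have hq0 : (0 : ℝ) < (q : ℝ) := lt_trans (half_pos ha) hq1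
    have hev := hlo.def (show (0 : ℝ) < (q : ℝ) / 8 by positivity)
    rw [Metric.eventually_nhds_iff] at hev
    obtain ⟨δ, hδ, hδ'⟩ := hev
    obtain ⟨n, hn⟩ := exists_nat_one_div_lt hδ
    refine Set.mem_iUnion.mpr ⟨q, Set.mem_iUnion.mpr ⟨n, hq0, a, hq2.le, by linarith, ?_⟩⟩
    intro h hh
    have hb := hδ' (show dist h 0 < δ by
      rw [Real.dist_eq, sub_zero]; exact lt_of_le_of_lt hh hn)
    have habs : ‖|h| ^ k‖ = |h| ^ k := by
      rw [Real.norm_eq_abs, abs_of_nonneg (pow_nonneg (abs_nonneg h) k)]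
    rw [Real.norm_eq_abs, habs] at hb
    exact hb
  refine measure_mono_null hsub ?_
  refine measure_iUnion_null fun q => measure_iUnion_null fun n => ?_
  exact (Eset_countable φ k hk hkodd q n).measure_zero _
end

section
/- Let k ≥ 2 and let φ : U → V be a C^{k-1} diffeomorphism between open subsets of ℝⁿ. If φ has a Taylor expansion of order k at a point x ∈ U (i.e., there is a polynomial P of degree ≤ k with φ(x+h) - P(h) = o(|h|^k)), then the inverse φ⁻¹ has a Taylor expansion of order k at y = φ(x). -/
open MeasureTheory Asymptotics Filter

noncomputable def polyEval {n m : ℕ} (P : Fin m → MvPolynomial (Fin n) ℝ)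
    (x : Fin n → ℝ) : Fin m → ℝ :=
  fun i => MvPolynomial.eval x (P i)

/-- `f` has a Taylor expansion of order `k` at `x`: there is a polynomial map of
degree at most `k` approximating `f` near `x` up to `o(|h|^k)`. -/
def HasTaylorExpansionAt {n m : ℕ} (f : (Fin n → ℝ) → (Fin m → ℝ)) (k : ℕ)
    (x : Fin n → ℝ) : Prop :=
  ∃ P : Fin m → MvPolynomial (Fin n) ℝ, (∀ i, (P i).totalDegree ≤ k) ∧
    (fun h => f (x + h) - polyEval P h) =o[nhds 0] fun h => ‖h‖ ^ k

/-!
Write `g u = ψ (φ x + u) - x` and split the Taylor polynomial as `P h = φ x + A h + R h`, where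
`A = DP(0) = Dφ(x)` and `R` vanishes to second order at `0`. Applying `B = Dψ(φ x) = A⁻¹` to
`φ (x + g u) = φ x + u` gives the fixed-point equation `g u = B (u - R (g u) - e (g u))` with
`e = o(‖h‖ ^ k)`. Since `R` is quadratically flat at `0`, every Picard step `Q ↦ B (u - R (Q u))`
gains one order of accuracy, so `k` steps from `0` produce a polynomial map `Q` with
`g - Q = o(‖u‖ ^ k)`. Truncating `Q` at degree `k` only costs `O(‖u‖ ^ (k + 1))`.
-/

open MvPolynomial Topology

theorem isBigO_norm_pow_of_le {E : Type*} [SeminormedAddCommGroup E] {i j : ℕ} (hij : j ≤ i) :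
    (fun u : E => ‖u‖ ^ i) =O[𝓝 0] fun u => ‖u‖ ^ j := by
  rcases hij.eq_or_lt with rfl | hlt
  · exact isBigO_refl _ _
  · exact ((isLittleO_pow_pow hlt).comp_tendsto tendsto_norm_zero).isBigO

section Monomial

variable {σ : Type*} [Fintype σ]

theorem norm_eval_monomial_le (u : σ → ℝ) (s : σ →₀ ℕ) (c : ℝ) :
    ‖eval u (monomial s c)‖ ≤ ‖c‖ * ‖u‖ ^ s.sum (fun _ e => e) := by
  rw [eval_monomial, norm_mul, Finsupp.prod, Finsupp.sum, ← Finset.prod_pow_eq_pow_sum]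
  gcongr
  refine (Finset.norm_prod_le _ _).trans (Finset.prod_le_prod (fun _ _ => norm_nonneg _) ?_)
  intro i _
  rw [norm_pow]
  gcongr
  exact norm_le_pi_norm u i

theorem isLittleO_eval_monomial {k : ℕ} (s : σ →₀ ℕ) (c : ℝ) (hs : k < s.sum fun _ e => e) :
    (fun u : σ → ℝ => eval u (monomial s c)) =o[𝓝 0] fun u => ‖u‖ ^ k := by
  refine IsBigO.trans_isLittleO ?_ ((isLittleO_pow_pow hs).comp_tendsto tendsto_norm_zero)
  refine IsBigO.of_bound ‖c‖ (Eventually.of_forall fun u => ?_)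
  simpa using norm_eval_monomial_le u s c

theorem MvPolynomial.exists_totalDegree_le_isLittleO (p : MvPolynomial σ ℝ) (k : ℕ) :
    ∃ q : MvPolynomial σ ℝ, q.totalDegree ≤ k ∧
      (fun u : σ → ℝ => eval u p - eval u q) =o[𝓝 0] fun u => ‖u‖ ^ k := by
  classical
  let low := p.support.filter fun s => (s.sum fun _ e => e) ≤ k
  let high := p.support.filter fun s => ¬(s.sum fun _ e => e) ≤ k
  refine ⟨∑ s ∈ low, monomial s (coeff s p), ?_, ?_⟩
  · refine (totalDegree_finsetSum _ _).trans (Finset.sup_le fun s hs => ?_)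
    exact (totalDegree_monomial_le _ _).trans (Finset.mem_filter.mp hs).2
  · have hsplit : ∀ u : σ → ℝ, eval u p - eval u (∑ s ∈ low, monomial s (coeff s p))
        = ∑ s ∈ high, eval u (monomial s (coeff s p)) := by
      intro u
      rw [sub_eq_iff_eq_add', ← map_sum, ← map_add, Finset.sum_filter_add_sum_filter_not,
        ← p.as_sum]
    simp only [hsplit]
    exact IsLittleO.fun_sum fun s hs =>
      isLittleO_eval_monomial s _ (not_le.mp (Finset.mem_filter.mp hs).2)

end Monomial

def IsPolynomialMap {n m : ℕ} (f : (Fin n → ℝ) → (Fin m → ℝ)) : Prop :=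
  ∃ P : Fin m → MvPolynomial (Fin n) ℝ, polyEval P = f

namespace IsPolynomialMap

variable {l n m : ℕ} {f g : (Fin n → ℝ) → (Fin m → ℝ)}

theorem const (c : Fin m → ℝ) : IsPolynomialMap fun _ : Fin n → ℝ => c :=
  ⟨fun i => C (c i), by funext u i; simp [polyEval]⟩

theorem linearMap (A : (Fin n → ℝ) →ₗ[ℝ] (Fin m → ℝ)) : IsPolynomialMap A := by
  classical
  refine ⟨fun i => ∑ j, C (A (fun j' => if j = j' then 1 else 0) i) * X j,
    funext fun u => funext fun i => ?_⟩
  rw [A.pi_apply_eq_sum_univ u]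
  simp [polyEval, mul_comm]

theorem add (hf : IsPolynomialMap f) (hg : IsPolynomialMap g) :
    IsPolynomialMap fun u => f u + g u := by
  obtain ⟨P, rfl⟩ := hf
  obtain ⟨Q, rfl⟩ := hg
  exact ⟨P + Q, by funext u i; simp [polyEval]⟩

theorem sub (hf : IsPolynomialMap f) (hg : IsPolynomialMap g) :
    IsPolynomialMap fun u => f u - g u := by
  obtain ⟨P, rfl⟩ := hf
  obtain ⟨Q, rfl⟩ := hg
  exact ⟨P - Q, by funext u i; simp [polyEval]⟩

theorem comp {h : (Fin l → ℝ) → (Fin n → ℝ)} (hf : IsPolynomialMap f) (hh : IsPolynomialMap h) :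
    IsPolynomialMap (f ∘ h) := by
  obtain ⟨P, rfl⟩ := hf
  obtain ⟨Q, rfl⟩ := hh
  refine ⟨fun i => bind₁ Q (P i), funext fun u => funext fun i => ?_⟩
  exact aeval_bind₁ u Q (P i)

theorem contDiff (hf : IsPolynomialMap f) {k : WithTop ℕ∞} : ContDiff ℝ k f := by
  obtain ⟨P, rfl⟩ := hf
  exact contDiff_pi.mpr fun i => (AnalyticOnNhd.eval_mvPolynomial (P i)).contDiff

theorem exists_totalDegree_le_isLittleO (hf : IsPolynomialMap f) (k : ℕ) :
    ∃ P : Fin m → MvPolynomial (Fin n) ℝ, (∀ i, (P i).totalDegree ≤ k) ∧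
      (fun u => f u - polyEval P u) =o[𝓝 0] fun u => ‖u‖ ^ k := by
  obtain ⟨P, rfl⟩ := hf
  choose Q hQdeg hQ using fun i => (P i).exists_totalDegree_le_isLittleO k
  exact ⟨Q, hQdeg, isLittleO_pi.mpr hQ⟩

end IsPolynomialMap

section Inversion

variable {E F : Type*} [NormedAddCommGroup E] [NormedSpace ℝ E]
  [NormedAddCommGroup F] [NormedSpace ℝ F]

theorem ContDiffAt.isBigO_sub_of_fderiv_eq_zero {R : F → E} (hR : ContDiffAt ℝ 2 R 0)
    (hR0 : fderiv ℝ R 0 = 0) {α : Type*} {l : Filter α} {a b : α → F}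
    (ha : Tendsto a l (𝓝 0)) (hb : Tendsto b l (𝓝 0)) :
    (fun t => R (a t) - R (b t)) =O[l] fun t => (‖a t‖ + ‖b t‖) * ‖a t - b t‖ := by
  obtain ⟨K, s, hs, hlip⟩ := (hR.fderiv_right (m := 1) le_rfl).exists_lipschitzOnWith
  have hdiff : ∀ᶠ z in 𝓝 (0 : F), DifferentiableAt ℝ R z :=
    (hR.eventually (by simp)).mono fun z hz => hz.differentiableAt (by simp)
  obtain ⟨δ, hδ, hball⟩ :=
    Metric.nhds_basis_closedBall.mem_iff.mp (inter_mem hs hdiff)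
  have hderiv : ∀ z ∈ Metric.closedBall (0 : F) δ, ‖fderiv ℝ R z‖ ≤ K * ‖z‖ := fun z hz => by
    simpa [hR0] using hlip.norm_sub_le (hball hz).1 (hball (Metric.mem_closedBall_self hδ.le)).1
  refine IsBigO.of_bound K ?_
  filter_upwards [ha.eventually (Metric.closedBall_mem_nhds 0 hδ),
    hb.eventually (Metric.closedBall_mem_nhds 0 hδ)] with t hat hbt
  rw [dist_zero_right] at hat hbt
  let r := max ‖a t‖ ‖b t‖
  have hsub : Metric.closedBall (0 : F) r ⊆ Metric.closedBall 0 δ :=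
    Metric.closedBall_subset_closedBall (max_le hat hbt)
  have hmvt := (convex_closedBall (0 : F) r).norm_image_sub_le_of_norm_fderiv_le
    (fun z hz => (hball (hsub hz)).2)
    (fun z hz => (hderiv z (hsub hz)).trans (mul_le_mul_of_nonneg_left
      (mem_closedBall_zero_iff.mp hz) K.coe_nonneg))
    (mem_closedBall_zero_iff.mpr (le_max_right _ _))
    (mem_closedBall_zero_iff.mpr (le_max_left _ _))
  calc ‖R (a t) - R (b t)‖ ≤ K * r * ‖a t - b t‖ := hmvt
    _ ≤ K * ‖(‖a t‖ + ‖b t‖) * ‖a t - b t‖‖ := by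
      rw [norm_mul, norm_norm, Real.norm_of_nonneg (by positivity), mul_assoc]
      gcongr
      exact max_le_add_of_nonneg (norm_nonneg _) (norm_nonneg _)

def picardIter (B : E →L[ℝ] F) (R : F → E) : ℕ → E → F
  | 0 => 0
  | j + 1 => fun u => B (u - R (picardIter B R j u))

variable {B : E →L[ℝ] F} {R e : F → E} {g : E → F} {k : ℕ}

theorem isLittleO_sub_picard_step (hR : ContDiffAt ℝ 2 R 0) (hR0 : fderiv ℝ R 0 = 0)
    (he : e =o[𝓝 0] fun h => ‖h‖ ^ k) (hg : g =O[𝓝 0] fun u => ‖u‖)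
    (hfix : ∀ᶠ u in 𝓝 0, g u = B (u - R (g u) - e (g u)))
    {Q : E → F} {j : ℕ} (hjk : j < k) (hQ : Q =O[𝓝 0] fun u => ‖u‖)
    (hgQ : (fun u => g u - Q u) =o[𝓝 0] fun u => ‖u‖ ^ j) :
    (fun u => g u - B (u - R (Q u))) =o[𝓝 0] fun u => ‖u‖ ^ (j + 1) := by
  have hRQ : (fun u => R (Q u) - R (g u)) =o[𝓝 0] fun u => ‖u‖ ^ (j + 1) := by
    refine (hR.isBigO_sub_of_fderiv_eq_zero hR0 (hQ.trans_tendsto tendsto_norm_zero)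
      (hg.trans_tendsto tendsto_norm_zero)).trans_isLittleO ?_
    simp_rw [norm_sub_rev (Q _), pow_succ']
    exact (hQ.norm_left.add hg.norm_left).mul_isLittleO hgQ.norm_left
  have hge : (fun u => e (g u)) =o[𝓝 0] fun u => ‖u‖ ^ (j + 1) :=
    ((he.comp_tendsto (hg.trans_tendsto tendsto_norm_zero)).trans_isBigO
      (hg.norm_left.pow k)).trans_isBigO (isBigO_norm_pow_of_le hjk)
  refine ((B.isBigO_comp _ _).trans_isLittleO (hRQ.sub hge)).congr' ?_ EventuallyEq.rfl
  filter_upwards [hfix] with u hu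
  conv_rhs => rw [hu]
  simp only [map_sub]
  abel

theorem isLittleO_sub_picardIter (hR : ContDiffAt ℝ 2 R 0) (hR0 : fderiv ℝ R 0 = 0)
    (he : e =o[𝓝 0] fun h => ‖h‖ ^ k) (hg : g =O[𝓝 0] fun u => ‖u‖)
    (hfix : ∀ᶠ u in 𝓝 0, g u = B (u - R (g u) - e (g u))) :
    (fun u => g u - picardIter B R k u) =o[𝓝 0] fun u => ‖u‖ ^ k := by
  suffices ∀ j ≤ k, (fun u => g u - picardIter B R j u) =o[𝓝 0] (fun u => ‖u‖ ^ j) ∧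
      picardIter B R j =O[𝓝 0] fun u => ‖u‖ from (this k le_rfl).1
  intro j
  induction j with
  | zero =>
    intro _
    exact ⟨by simpa [picardIter] using hg.trans_tendsto tendsto_norm_zero, isBigO_zero _ _⟩
  | succ j ih =>
    intro hjk
    obtain ⟨hgQ, hQ⟩ := ih (by omega)
    have herr := isLittleO_sub_picard_step hR hR0 he hg hfix hjk hQ hgQ
    refine ⟨herr, (hg.sub (herr.isBigO.trans ?_)).congr_left fun u => sub_sub_cancel _ _⟩
    simpa using isBigO_norm_pow_of_le (E := E) (Nat.succ_pos j)

theorem hasFDerivAt_of_isLittleO_sub {f p : E → F} {x : E} {k : ℕ} (hk : k ≠ 0)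
    (hp : DifferentiableAt ℝ p 0) (h : (fun h => f (x + h) - p h) =o[𝓝 0] fun h => ‖h‖ ^ k) :
    HasFDerivAt f (fderiv ℝ p 0) x := by
  have he0 : (fun h => f (x + h) - p h) 0 = 0 :=
    IsBigO.eq_zero_of_norm_pow (f := fun h => f (x + h) - p h) (x₀ := 0)
      (by simpa using h.isBigO) hk
  simp only [add_zero, sub_eq_zero] at he0
  have he : HasFDerivAt (fun h => f (x + h) - p h) (0 : E →L[ℝ] F) 0 := by
    have ho : (fun h => f (x + h) - p h) =o[𝓝 0] fun h => h := isLittleO_norm_right.mp <| by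
      simpa using h.trans_isBigO (isBigO_norm_pow_of_le (Nat.one_le_iff_ne_zero.mpr hk))
    rw [hasFDerivAt_iff_isLittleO_nhds_zero]
    simpa [he0] using ho
  have hf : HasFDerivAt (fun h => f (x + h)) (fderiv ℝ p 0) 0 := by
    simpa using he.fun_add hp.hasFDerivAt
  simpa using (hasFDerivAt_comp_add_left x).mp hf

theorem HasFDerivAt.apply_apply_eq_of_eventually_rightInverse [FiniteDimensional ℝ E]
    {φ ψ : E → E} {A B : E →L[ℝ] E} {y : E} (hφ : HasFDerivAt φ A (ψ y))
    (hψ : HasFDerivAt ψ B y) (hinv : ∀ᶠ z in 𝓝 y, φ (ψ z) = z) (v : E) : B (A v) = v := by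
  have hAB : A.comp B = ContinuousLinearMap.id ℝ E :=
    ((hφ.comp y hψ).congr_of_eventuallyEq (hinv.mono fun _ h => h.symm)).unique
      (hasFDerivAt_id y)
  have hAB' : A.toLinearMap ∘ₗ B.toLinearMap = LinearMap.id := congr(($hAB).toLinearMap)
  exact LinearMap.congr_fun ((LinearMap.comp_eq_id_comm ℝ E).mp hAB') v

theorem isLittleO_inverse_sub_picardIter [FiniteDimensional ℝ E] {φ ψ p : E → E} {x : E}
    {B : E →L[ℝ] E} {k : ℕ} (hk : k ≠ 0) (hp : ContDiffAt ℝ 2 p 0)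
    (he : (fun h => φ (x + h) - p h) =o[𝓝 0] fun h => ‖h‖ ^ k) (hψx : ψ (φ x) = x)
    (hinv : ∀ᶠ y in 𝓝 (φ x), φ (ψ y) = y) (hψ : HasFDerivAt ψ B (φ x)) :
    (fun u => ψ (φ x + u) - x - picardIter B (fun h => p h - φ x - fderiv ℝ p 0 h) k u)
      =o[𝓝 0] fun u => ‖u‖ ^ k := by
  set A := fderiv ℝ p 0
  have hpA : HasFDerivAt p A 0 := (hp.differentiableAt two_ne_zero).hasFDerivAt
  have hBA := (hψx ▸ hasFDerivAt_of_isLittleO_sub hk hpA.differentiableAt he)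
    |>.apply_apply_eq_of_eventually_rightInverse hψ hinv
  set R := fun h => p h - φ x - A h
  have hR : ContDiffAt ℝ 2 R 0 := (hp.sub contDiffAt_const).sub A.contDiff.contDiffAt
  have hR0 : fderiv ℝ R 0 = 0 := by
    simpa using ((hpA.sub_const (φ x)).fun_sub A.hasFDerivAt).fderiv
  set g := fun u => ψ (φ x + u) - x
  have hg : g =O[𝓝 0] fun u => ‖u‖ := by
    have := ((hasFDerivAt_comp_add_left (φ x)).mpr (by rwa [add_zero])).isBigO_sub.norm_right
    simpa only [add_zero, sub_zero, hψx] using this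
  have hfix : ∀ᶠ u in 𝓝 0, g u = B (u - R (g u) - (φ (x + g u) - p (g u))) := by
    filter_upwards [((continuous_const_add (φ x)).tendsto' 0 _ (add_zero _)).eventually hinv]
      with u hu
    rw [show x + g u = ψ (φ x + u) from add_sub_cancel x _, hu]
    calc g u = B (A (g u)) := (hBA _).symm
      _ = _ := by congr 1; simp only [R]; abel
  exact isLittleO_sub_picardIter hR hR0 he hg hfix

end Inversion

theorem IsPolynomialMap.picardIter {n m : ℕ} {B : (Fin m → ℝ) →L[ℝ] (Fin n → ℝ)}
    {R : (Fin n → ℝ) → (Fin m → ℝ)} (hR : IsPolynomialMap R) (j : ℕ) :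
    IsPolynomialMap (picardIter B R j) := by
  induction j with
  | zero => exact const 0
  | succ j ih => exact (linearMap B.toLinearMap).comp ((linearMap LinearMap.id).sub (hR.comp ih))

theorem inverse_has_taylor_expansion_general
    (n k : ℕ) (hk : 2 ≤ k) (U V : Set (Fin n → ℝ)) (hV : IsOpen V)
    (φ ψ : (Fin n → ℝ) → (Fin n → ℝ))
    (hφU : Set.MapsTo φ U V)
    (hleft : ∀ x ∈ U, ψ (φ x) = x) (hright : ∀ y ∈ V, φ (ψ y) = y)
    (hψ : ContDiffOn ℝ (k - 1 : ℕ) ψ V)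
    (x : Fin n → ℝ) (hx : x ∈ U)
    (hTaylor : HasTaylorExpansionAt φ k x) :
    HasTaylorExpansionAt ψ k (φ x) := by
  obtain ⟨P, -, he⟩ := hTaylor
  have hP : IsPolynomialMap (polyEval P) := ⟨P, rfl⟩
  have hψ' : DifferentiableAt ℝ ψ (φ x) :=
    (hψ.contDiffAt (hV.mem_nhds (hφU hx))).differentiableAt (by norm_cast; omega)
  have hexp := isLittleO_inverse_sub_picardIter (by omega) hP.contDiff.contDiffAt he (hleft x hx)
    ((hV.eventually_mem (hφU hx)).mono hright) hψ'.hasFDerivAt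
  have hR : IsPolynomialMap fun h => polyEval P h - φ x - fderiv ℝ (polyEval P) 0 h :=
    (hP.sub (.const _)).sub (.linearMap (fderiv ℝ (polyEval P) 0).toLinearMap)
  obtain ⟨Q, hQdeg, hQ⟩ := ((IsPolynomialMap.const x).add
    (hR.picardIter (B := fderiv ℝ ψ (φ x)) k)).exists_totalDegree_le_isLittleO k
  exact ⟨Q, hQdeg, (hexp.add hQ).congr_left fun u => by abel⟩

theorem inverse_has_taylor_expansion
    (n k : ℕ) (hk : 2 ≤ k) (U V : Set (Fin n → ℝ)) (hU : IsOpen U) (hV : IsOpen V)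
    (φ ψ : (Fin n → ℝ) → (Fin n → ℝ))
    (hφU : Set.MapsTo φ U V) (hψV : Set.MapsTo ψ V U)
    (hleft : ∀ x ∈ U, ψ (φ x) = x) (hright : ∀ y ∈ V, φ (ψ y) = y)
    (hφ : ContDiffOn ℝ (k - 1 : ℕ) φ U) (hψ : ContDiffOn ℝ (k - 1 : ℕ) ψ V)
    (x : Fin n → ℝ) (hx : x ∈ U)
    (hTaylor : HasTaylorExpansionAt φ k x) :
    HasTaylorExpansionAt ψ k (φ x) :=
  inverse_has_taylor_expansion_general n k hk U V hV φ ψ hφU hleft hright hψ x hx hTaylor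
end

section
/- Let k ≥ 2 and let φ : U → V be a C¹ diffeomorphism between open subsets of ℝⁿ. Suppose that for some x ∈ U and some polynomial P of degree ≤ k-1, limsup_{h→0} |φ(x+h) - P(h)|/|h|^k < ∞. Then there exists a polynomial Q of degree ≤ k-1 such that limsup_{h→0} |φ⁻¹(y+h) - Q(h)|/|h|^k < ∞, where y = φ(x). -/
open MeasureTheory Asymptotics Filter

/-!
Write `P(h) = y + A h + E(h)` with `y = φ x` and `E` of order `≥ 2`. Since `φ` agrees with `P`
to order `k ≥ 2`, `A` is the derivative of `φ` at `x`, so `B = Dψ(y)` inverts it. The Picard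
iteration `S ↦ B (X - E ∘ S)` for polynomial maps gains one order per step, because `E` has order
`≥ 2`; after enough steps, truncated below degree `k`, it gives a polynomial map `S` with
`P ∘ S = y + X` modulo terms of degree `≥ k`. Hence `φ (x + S h) = y + h + O(‖h‖ ^ k)`, and
applying `ψ`, which is Lipschitz near `y`, gives `ψ (y + h) = x + S h + O(‖h‖ ^ k)`.
-/

open Topology Matrix

theorem Ideal.mulVec_apply_mem {ι σ S : Type*} [Fintype σ] [CommRing S] {I : Ideal S}
    (M : Matrix ι σ S) {v : σ → S} (hv : ∀ j, v j ∈ I) (i : ι) : (M *ᵥ v) i ∈ I :=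
  Ideal.sum_mem _ fun j _ => Ideal.mul_mem_left _ _ (hv j)

namespace MvPolynomial

variable {σ τ R : Type*} [CommRing R]

theorem bind₁_sub_bind₁_mem {I : Ideal (MvPolynomial τ R)} {f g : σ → MvPolynomial τ R}
    (hfg : ∀ j, f j - g j ∈ I) (p : MvPolynomial σ R) : bind₁ f p - bind₁ g p ∈ I := by
  rw [← Ideal.Quotient.eq]
  suffices (Ideal.Quotient.mkₐ R I).comp (bind₁ f) = (Ideal.Quotient.mkₐ R I).comp (bind₁ g) from
    AlgHom.congr_fun this p
  ext j
  simpa [Ideal.Quotient.eq] using hfg j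

theorem bind₁_mem_pow_idealOfVars {f : σ → MvPolynomial τ R} (hf : ∀ j, f j ∈ idealOfVars τ R)
    {m : ℕ} {p : MvPolynomial σ R} (hp : p ∈ idealOfVars σ R ^ m) :
    bind₁ f p ∈ idealOfVars τ R ^ m := by
  have hmap : (idealOfVars σ R).map (bind₁ f) ≤ idealOfVars τ R := by
    rw [Ideal.map_span, Ideal.span_le]
    rintro _ ⟨_, ⟨j, rfl⟩, rfl⟩
    simpa using hf j
  refine Ideal.pow_right_mono hmap m ?_
  rw [← Ideal.map_pow]
  exact Ideal.mem_map_of_mem _ hp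

theorem bind₁_sub_bind₁_mem_pow_add {f g : σ → MvPolynomial τ R}
    (hf : ∀ j, f j ∈ idealOfVars τ R) {t : ℕ} (hfg : ∀ j, f j - g j ∈ idealOfVars τ R ^ (t + 1))
    {a : ℕ} {p : MvPolynomial σ R} (hp : p ∈ idealOfVars σ R ^ a) :
    bind₁ f p - bind₁ g p ∈ idealOfVars τ R ^ (t + a) := by
  have hg (j : σ) : g j ∈ idealOfVars τ R := by
    simpa using sub_mem (hf j) (Ideal.pow_le_self t.succ_ne_zero (hfg j))
  induction hp using Submodule.pow_induction_on_left' with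
  | algebraMap r => exact Ideal.pow_le_pow_right t.le_succ (bind₁_sub_bind₁_mem hfg r)
  | add p q i _ _ hp hq =>
    rw [map_add, map_add, add_sub_add_comm]
    exact add_mem hp hq
  | mem_mul p hp i q hq ih =>
    have hsplit : bind₁ f (p * q) - bind₁ g (p * q)
        = (bind₁ f p - bind₁ g p) * bind₁ f q + bind₁ g p * (bind₁ f q - bind₁ g q) := by
      simp only [map_mul]; ring
    rw [hsplit, show t + (i + 1) = t + 1 + i by ring]
    refine add_mem ?_ ?_
    · rw [pow_add]
      exact Ideal.mul_mem_mul (bind₁_sub_bind₁_mem hfg p) (bind₁_mem_pow_idealOfVars hf hq)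
    · rw [add_right_comm, add_comm, pow_add, pow_one]
      have hgp : bind₁ g p ∈ idealOfVars τ R := by
        simpa using bind₁_mem_pow_idealOfVars (m := 1) hg (by simpa using hp)
      exact Ideal.mul_mem_mul hgp ih

theorem eval_bind₁ (f : τ → R) (g : σ → MvPolynomial τ R) (p : MvPolynomial σ R) :
    eval f (bind₁ g p) = eval (fun i => eval f (g i)) p :=
  eval₂Hom_bind₁ _ _ _ _

variable [Fintype σ]

theorem bind₁_mulVec_map_C_X (A : Matrix σ σ R) (f : σ → MvPolynomial τ R) (i : σ) :
    bind₁ f ((A.map C *ᵥ X) i) = (A.map C *ᵥ f) i := by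
  simp [Matrix.mulVec, dotProduct]

theorem exists_bind₁_sub_X_mem_pow [DecidableEq σ] {A B : Matrix σ σ R} (hAB : A * B = 1)
    {F : σ → MvPolynomial σ R} (hF : ∀ i, F i - (A.map C *ᵥ X) i ∈ idealOfVars σ R ^ 2) (k : ℕ) :
    ∃ S : σ → MvPolynomial σ R,
      (∀ j, S j ∈ idealOfVars σ R) ∧ ∀ i, bind₁ S (F i) - X i ∈ idealOfVars σ R ^ k := by
  obtain ⟨E, hE, rfl⟩ : ∃ E : σ → MvPolynomial σ R,
      (∀ i, E i ∈ idealOfVars σ R ^ 2) ∧ F = E + A.map C *ᵥ X :=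
    ⟨_, hF, by funext i; simp⟩
  set S : ℕ → σ → MvPolynomial σ R :=
    fun s => (fun T => B.map C *ᵥ (X - fun i => bind₁ T (E i)))^[s] 0
  have hS_zero : S 0 = 0 := rfl
  have hS_succ (s : ℕ) : S (s + 1) = B.map C *ᵥ (X - fun i => bind₁ (S s) (E i)) :=
    Function.iterate_succ_apply' _ s 0
  clear_value S
  have hS (s : ℕ) (j : σ) : S s j ∈ idealOfVars σ R := by
    induction s generalizing j with
    | zero => simp [hS_zero]
    | succ s ih =>
      rw [hS_succ]
      refine Ideal.mulVec_apply_mem _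
        (fun i => sub_mem (Ideal.subset_span (Set.mem_range_self i)) ?_) j
      exact Ideal.pow_le_self two_ne_zero (bind₁_mem_pow_idealOfVars ih (hE i))
  have hS_sub (s : ℕ) (j : σ) : S (s + 1) j - S s j ∈ idealOfVars σ R ^ (s + 1) := by
    induction s generalizing j with
    | zero => simpa [hS_zero] using hS 1 j
    | succ s ih =>
      rw [hS_succ (s + 1), hS_succ s, ← Pi.sub_apply, ← Matrix.mulVec_sub,
        sub_sub_sub_cancel_left]
      refine Ideal.mulVec_apply_mem _ (fun i => ?_) j
      rw [Pi.sub_apply, ← neg_sub, ← hS_succ s]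
      exact neg_mem (bind₁_sub_bind₁_mem_pow_add (hS (s + 1)) ih (hE i))
  have hdefect (s : ℕ) (i : σ) :
      bind₁ (S (s + 1)) ((E + A.map C *ᵥ X) i) - X i
        = bind₁ (S (s + 1)) (E i) - bind₁ (S s) (E i) := by
    have hAS : A.map C *ᵥ S (s + 1) = X - fun i => bind₁ (S s) (E i) := by
      rw [hS_succ, Matrix.mulVec_mulVec, ← Matrix.map_mul, hAB, Matrix.map_one _ C_0 C_1,
        Matrix.one_mulVec]
    rw [Pi.add_apply, map_add, bind₁_mulVec_map_C_X, hAS, Pi.sub_apply]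
    ring
  refine ⟨S (k + 1), hS (k + 1), fun i => ?_⟩
  rw [hdefect]
  exact Ideal.pow_le_pow_right (by omega) (bind₁_sub_bind₁_mem_pow_add (hS _) (hS_sub k) (hE i))

theorem sub_truncTotal_mem_pow_idealOfVars (p : MvPolynomial σ R) (k : ℕ) :
    p - MvPowerSeries.truncTotal k (p : MvPowerSeries σ R) ∈ idealOfVars σ R ^ k := by
  rw [mem_pow_idealOfVars_iff']
  intro d hd
  rw [coeff_sub, MvPowerSeries.coeff_truncTotal _ hd, coeff_coe, sub_self]

theorem exists_totalDegree_lt_bind₁_sub_X_mem_pow [DecidableEq σ] {A B : Matrix σ σ R}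
    (hAB : A * B = 1) {F : σ → MvPolynomial σ R}
    (hF : ∀ i, F i - (A.map C *ᵥ X) i ∈ idealOfVars σ R ^ 2) {k : ℕ} (hk : k ≠ 0) :
    ∃ T : σ → MvPolynomial σ R, (∀ j, T j ∈ idealOfVars σ R) ∧ (∀ j, (T j).totalDegree < k) ∧
      ∀ i, bind₁ T (F i) - X i ∈ idealOfVars σ R ^ k := by
  obtain ⟨S, hS, hSF⟩ := exists_bind₁_sub_X_mem_pow hAB hF k
  set T : σ → MvPolynomial σ R := fun j => MvPowerSeries.truncTotal k (S j : MvPowerSeries σ R)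
  have hST (j : σ) : S j - T j ∈ idealOfVars σ R ^ k := sub_truncTotal_mem_pow_idealOfVars (S j) k
  refine ⟨T, fun j => ?_, fun j => MvPowerSeries.totalDegree_truncTotal_lt _ hk, fun i => ?_⟩
  · simpa using sub_mem (hS j) (Ideal.pow_le_self hk (hST j))
  · have hTS := bind₁_sub_bind₁_mem (fun j => neg_sub (S j) (T j) ▸ neg_mem (hST j)) (F i)
    simpa using add_mem hTS (hSF i)

noncomputable def linearCoeffs {ι : Type*} (P : ι → MvPolynomial σ R) : Matrix ι σ R :=
  .of fun i j => coeff (Finsupp.single j 1) (P i)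

theorem sub_C_sub_linearCoeffs_mem_pow_two {ι : Type*} (P : ι → MvPolynomial σ R) (i : ι) :
    P i - C (constantCoeff (P i)) - ((linearCoeffs P).map C *ᵥ X) i ∈ idealOfVars σ R ^ 2 := by
  classical
  change P i - _ - ∑ j, C (coeff (Finsupp.single j 1) (P i)) * X j ∈ _
  rw [mem_pow_idealOfVars_iff']
  intro d hd
  simp only [coeff_sub, coeff_C, coeff_sum, C_mul_X_eq_monomial, coeff_monomial]
  obtain hd0 | hd1 : d.degree = 0 ∨ d.degree = 1 := by omega
  · obtain rfl : d = 0 := (Finsupp.degree_eq_zero_iff d).mp hd0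
    simp [constantCoeff]
  · obtain ⟨j, rfl⟩ : d ∈ Set.range (fun j : σ => Finsupp.single j 1) := by
      rw [Finsupp.range_single_one]; exact hd1
    simp [Finsupp.single_left_inj, (Finsupp.single_ne_zero.mpr one_ne_zero).symm]

end MvPolynomial

open MvPolynomial

theorem isBigO_eval_of_mem_pow_idealOfVars {σ 𝕜 : Type*} [Fintype σ] [NormedField 𝕜] {m : ℕ}
    {p : MvPolynomial σ 𝕜}
    (hp : p ∈ idealOfVars σ 𝕜 ^ m) :
    (fun h : σ → 𝕜 => eval h p) =O[𝓝 0] fun h => ‖h‖ ^ m := by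
  rw [pow_idealOfVars_eq_span] at hp
  induction hp using Submodule.span_induction with
  | mem q hq =>
    obtain ⟨d, hd : d.degree = m, rfl⟩ := hq
    have hcoord (i : σ) : (fun h : σ → 𝕜 => h i ^ d i) =O[𝓝 0] fun h => ‖h‖ ^ d i :=
      (isBigO_of_le _ fun h => by simpa using norm_le_pi_norm h i).pow (d i)
    have hprod := IsBigO.finsetProd (s := d.support) fun i _ => hcoord i
    refine hprod.congr' (Eventually.of_forall fun h => ?_) (Eventually.of_forall fun h => ?_)
    · simp [eval_monomial, Finsupp.prod]
    · simp only [Finset.prod_pow_eq_pow_sum, ← hd]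
      rfl
  | zero => exact isBigO_zero _ _
  | add p q _ _ hp hq => simpa using hp.add hq
  | smul r p _ hp =>
    have hr := ((continuous_eval r).tendsto (0 : σ → 𝕜)).isBigO_one ℝ
    simpa using hr.mul hp

theorem isBigO_sub_of_leftInverse {E F : Type*} [NormedAddCommGroup E] [NormedAddCommGroup F]
    {φ : E → F} {ψ : F → E} {x : E} {u : F → E} {K : NNReal} {t : Set F}
    (hψ : LipschitzOnWith K ψ t) (ht : t ∈ 𝓝 (φ x)) (hφ : ContinuousAt φ x)
    (hinv : ∀ᶠ z in 𝓝 x, ψ (φ z) = z) (hu : Tendsto u (𝓝 0) (𝓝 0)) :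
    (fun h => ψ (φ x + h) - (x + u h)) =O[𝓝 0] fun h => φ (x + u h) - (φ x + h) := by
  have hxu : Tendsto (fun h => x + u h) (𝓝 0) (𝓝 x) := by
    simpa using (tendsto_const_nhds (x := x)).add hu
  have hyh : Tendsto (fun h => φ x + h) (𝓝 (0 : F)) (𝓝 (φ x)) := by
    simpa using (continuous_const_add (φ x)).tendsto 0
  refine isBigO_iff.2 ⟨K, ?_⟩
  filter_upwards [hxu.eventually hinv, (hφ.tendsto.comp hxu).eventually_mem ht,
    hyh.eventually_mem ht] with h hinv_h hφ_h hy_h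
  calc ‖ψ (φ x + h) - (x + u h)‖ = dist (ψ (φ x + h)) (ψ (φ (x + u h))) := by
        rw [hinv_h, dist_eq_norm]
    _ ≤ K * dist (φ x + h) (φ (x + u h)) := hψ.dist_le_mul _ hy_h _ hφ_h
    _ = K * ‖φ (x + u h) - (φ x + h)‖ := by rw [dist_eq_norm']

theorem exists_mul_eq_one_of_leftInverse {𝕜 σ : Type*} [NontriviallyNormedField 𝕜]
    [CompleteSpace 𝕜] [Fintype σ] [DecidableEq σ] {φ ψ : (σ → 𝕜) → σ → 𝕜} {x : σ → 𝕜}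
    {A : Matrix σ σ 𝕜}
    (hφ : HasFDerivAt φ (Matrix.toLin' A).toContinuousLinearMap x)
    (hψ : DifferentiableAt 𝕜 ψ (φ x)) (hinv : ∀ᶠ z in 𝓝 x, ψ (φ z) = z) :
    ∃ B : Matrix σ σ 𝕜, B * A = 1 := by
  have hcomp : (fderiv 𝕜 ψ (φ x)).comp (Matrix.toLin' A).toContinuousLinearMap
      = ContinuousLinearMap.id 𝕜 _ :=
    (hψ.hasFDerivAt.comp x hφ).unique ((hasFDerivAt_id x).congr_of_eventuallyEq hinv)
  refine ⟨LinearMap.toMatrix' (fderiv 𝕜 ψ (φ x) : (σ → 𝕜) →ₗ[𝕜] σ → 𝕜), ?_⟩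
  rw [← LinearMap.toMatrix'_toLin' A, ← LinearMap.toMatrix'_comp]
  have := congrArg (fun L : (σ → 𝕜) →L[𝕜] σ → 𝕜 => (L : (σ → 𝕜) →ₗ[𝕜] σ → 𝕜)) hcomp
  simpa using congrArg LinearMap.toMatrix' this

section PolyEval

variable {n k : ℕ} {φ : (Fin n → ℝ) → Fin n → ℝ} {x : Fin n → ℝ}
  {P : Fin n → MvPolynomial (Fin n) ℝ}

theorem isBigO_polyEval {m : ℕ} {Q : Fin n → MvPolynomial (Fin n) ℝ}
    (hQ : ∀ i, Q i ∈ idealOfVars (Fin n) ℝ ^ m) : polyEval Q =O[𝓝 0] fun h => ‖h‖ ^ m :=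
  isBigO_pi.2 fun i => isBigO_eval_of_mem_pow_idealOfVars (hQ i)

theorem tendsto_polyEval {T : Fin n → MvPolynomial (Fin n) ℝ}
    (hT : ∀ j, T j ∈ idealOfVars (Fin n) ℝ) : Tendsto (polyEval T) (𝓝 0) (𝓝 0) :=
  (isBigO_polyEval (m := 1) (by simpa using hT)).trans_tendsto (by simpa using tendsto_norm_zero)

theorem constantCoeff_eq_of_isBigO_sub_polyEval (hk : k ≠ 0)
    (hP : (fun h => φ (x + h) - polyEval P h) =O[𝓝 0] fun h => ‖h‖ ^ k) (i : Fin n) :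
    constantCoeff (P i) = φ x i := by
  have h0 := IsBigO.eq_zero_of_norm_pow (f := fun h => φ (x + h) - polyEval P h) (x₀ := 0)
    (by simpa using hP) hk
  have h0i := congrFun h0 i
  simp only [add_zero, Pi.sub_apply, Pi.zero_apply, polyEval, eval_zero] at h0i
  exact (sub_eq_zero.mp h0i).symm

theorem hasFDerivAt_of_isBigO_sub_polyEval (hk : 2 ≤ k)
    (hP : (fun h => φ (x + h) - polyEval P h) =O[𝓝 0] fun h => ‖h‖ ^ k)
    {A : Matrix (Fin n) (Fin n) ℝ}
    (hA : ∀ i, P i - C (φ x i) - (A.map C *ᵥ X) i ∈ idealOfVars (Fin n) ℝ ^ 2) :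
    HasFDerivAt φ (Matrix.toLin' A).toContinuousLinearMap x := by
  rw [hasFDerivAt_iff_isLittleO_nhds_zero]
  have hφP := hP.trans_isLittleO (isLittleO_norm_pow_id (by omega))
  have hPA := (isBigO_polyEval hA).trans_isLittleO (isLittleO_norm_pow_id one_lt_two)
  refine (hφP.add hPA).congr_left fun h => ?_
  ext i
  simp only [mulVec, dotProduct, map_apply, Pi.add_apply, Pi.sub_apply, polyEval, map_sub, eval_C,
    map_sum, map_mul, eval_X, LinearMap.coe_toContinuousLinearMap', toLin'_apply]
  abel

theorem isBigO_comp_polyEval_sub {T : Fin n → MvPolynomial (Fin n) ℝ}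
    (hP : (fun h => φ (x + h) - polyEval P h) =O[𝓝 0] fun h => ‖h‖ ^ k)
    (hT : ∀ j, T j ∈ idealOfVars (Fin n) ℝ)
    (hTP : ∀ i, bind₁ T (P i - C (φ x i)) - X i ∈ idealOfVars (Fin n) ℝ ^ k) :
    (fun h => φ (x + polyEval T h) - (φ x + h)) =O[𝓝 0] fun h => ‖h‖ ^ k := by
  have hT1 : polyEval T =O[𝓝 0] fun h => ‖h‖ := by
    simpa using isBigO_polyEval (m := 1) (by simpa using hT)
  have hφP := (hP.comp_tendsto (tendsto_polyEval hT)).trans (hT1.norm_left.pow k)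
  refine (hφP.add (isBigO_polyEval hTP)).congr_left fun h => ?_
  ext i
  simp only [Function.comp_apply, Pi.add_apply, Pi.sub_apply, polyEval, map_sub, eval_bind₁,
    eval_C, eval_X]
  rw [show (fun j => eval h (T j)) = polyEval T h from rfl]
  abel

end PolyEval

theorem inverse_has_bigO_expansion_general
    (n k : ℕ) (hk : 2 ≤ k) (U V : Set (Fin n → ℝ)) (hU : IsOpen U) (hV : IsOpen V)
    (φ ψ : (Fin n → ℝ) → (Fin n → ℝ))
    (hφU : Set.MapsTo φ U V)
    (hleft : ∀ x ∈ U, ψ (φ x) = x)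
    (hφ : ContDiffOn ℝ 1 φ U) (hψ : ContDiffOn ℝ 1 ψ V)
    (x : Fin n → ℝ) (hx : x ∈ U)
    (P : Fin n → MvPolynomial (Fin n) ℝ)
    (hP : (fun h => φ (x + h) - polyEval P h) =O[nhds 0] fun h => ‖h‖ ^ k) :
    ∃ Q : Fin n → MvPolynomial (Fin n) ℝ, (∀ i, (Q i).totalDegree ≤ k - 1) ∧
      (fun h => ψ (φ x + h) - polyEval Q h) =O[nhds 0] fun h => ‖h‖ ^ k := by
  have hφx : ContinuousAt φ x := hφ.continuousOn.continuousAt (hU.mem_nhds hx)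
  have hψy : ContDiffAt ℝ 1 ψ (φ x) := hψ.contDiffAt (hV.mem_nhds (hφU hx))
  have hinv : ∀ᶠ z in 𝓝 x, ψ (φ z) = z := eventually_of_mem (hU.mem_nhds hx) hleft
  have hlin (i : Fin n) :
      P i - C (φ x i) - ((linearCoeffs P).map C *ᵥ X) i ∈ idealOfVars (Fin n) ℝ ^ 2 := by
    simpa [constantCoeff_eq_of_isBigO_sub_polyEval (by omega) hP i] using
      sub_C_sub_linearCoeffs_mem_pow_two P i
  obtain ⟨B, hBA⟩ := exists_mul_eq_one_of_leftInverse
    (hasFDerivAt_of_isBigO_sub_polyEval hk hP hlin) (hψy.differentiableAt one_ne_zero) hinv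
  obtain ⟨T, hT, hTdeg, hTP⟩ :=
    exists_totalDegree_lt_bind₁_sub_X_mem_pow (mul_eq_one_comm.mp hBA) hlin (k := k) (by omega)
  refine ⟨fun i => C (x i) + T i, fun i => ?_, ?_⟩
  · exact (totalDegree_add _ _).trans (max_le (by simp) (by have := hTdeg i; omega))
  obtain ⟨K, t, ht, hK⟩ := hψy.exists_lipschitzOnWith
  refine ((isBigO_sub_of_leftInverse hK ht hφx hinv (tendsto_polyEval hT)).congr_left
    fun h => ?_).trans (isBigO_comp_polyEval_sub hP hT hTP)
  ext i
  simp [polyEval]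

theorem inverse_has_bigO_expansion
    (n k : ℕ) (hk : 2 ≤ k) (U V : Set (Fin n → ℝ)) (hU : IsOpen U) (hV : IsOpen V)
    (φ ψ : (Fin n → ℝ) → (Fin n → ℝ))
    (hφU : Set.MapsTo φ U V) (hψV : Set.MapsTo ψ V U)
    (hleft : ∀ x ∈ U, ψ (φ x) = x) (hright : ∀ y ∈ V, φ (ψ y) = y)
    (hφ : ContDiffOn ℝ 1 φ U) (hψ : ContDiffOn ℝ 1 ψ V)
    (x : Fin n → ℝ) (hx : x ∈ U)
    (P : Fin n → MvPolynomial (Fin n) ℝ) (hPdeg : ∀ i, (P i).totalDegree ≤ k - 1)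
    (hP : (fun h => φ (x + h) - polyEval P h) =O[nhds 0] fun h => ‖h‖ ^ k) :
    ∃ Q : Fin n → MvPolynomial (Fin n) ℝ, (∀ i, (Q i).totalDegree ≤ k - 1) ∧
      (fun h => ψ (φ x + h) - polyEval Q h) =O[nhds 0] fun h => ‖h‖ ^ k :=
  inverse_has_bigO_expansion_general n k hk U V hU hV φ ψ hφU hleft hφ hψ x hx P hP
end

section
/- Let f : ℝⁿ → ℝᵐ be a function, 1 ≤ k ≤ n - m + 1, and ℓ = n - m - k + 1. If N is a subset of {x : limsup_{h→0} |f(x+h)-f(x)|/|h|^k < ∞} with 𝓛ⁿ(N) = 0, then 𝓗^ℓ(N ∩ f⁻¹(y)) = 0 for 𝓛ᵐ-almost every y ∈ ℝᵐ. -/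
/-!
Split `N` into the pieces on which `f` is `j`-Hölder of order `k` at scale `1 / (j + 1)`.
A null piece `S` is covered, by Besicovitch, by small balls `B(x, r)` centred in `S` with
`∑ rⁿ` arbitrarily small. The fibre `S ∩ f⁻¹{y}` meets `B(x, r)` only if `y ∈ B(f x, j rᵏ)`, so its
`ℓ`-dimensional Hausdorff content is at most `∑ (2r)^ℓ 𝟙_{B(f x, j rᵏ)}(y)`, whose integral in `y`
is `≲ ∑ r^(ℓ + k m) ≤ ∑ rⁿ` because `ℓ + k m ≥ n`. Fatou's lemma then forces the Hausdorff measure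
of almost every fibre to vanish.
-/

open MeasureTheory Asymptotics Filter Metric Set Module
open scoped ENNReal Topology

section HolderPiece

variable {E F : Type*} [SeminormedAddCommGroup E] [SeminormedAddCommGroup F]

def holderPiece (f : E → F) (α : ℝ) (j : ℕ) : Set E :=
  {x | ∀ h : E, ‖h‖ ≤ 1 / ((j : ℝ) + 1) → ‖f (x + h) - f x‖ ≤ j * ‖h‖ ^ α}

theorem setOf_isBigO_subset_iUnion_holderPiece (f : E → F) (α : ℝ) :
    {x | (fun h => f (x + h) - f x) =O[𝓝 0] fun h => ‖h‖ ^ α} ⊆ ⋃ j, holderPiece f α j := by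
  intro x hx
  obtain ⟨c, hc⟩ := IsBigO.bound hx
  obtain ⟨ε, hε, hball⟩ := Metric.eventually_nhds_iff.1 hc
  obtain ⟨j, hcj, hjε⟩ := ((tendsto_natCast_atTop_atTop.eventually_ge_atTop c).and
    (tendsto_one_div_add_atTop_nhds_zero_nat.eventually (gt_mem_nhds hε))).exists
  refine mem_iUnion.2 ⟨j, fun h hh => ?_⟩
  calc ‖f (x + h) - f x‖ ≤ c * ‖‖h‖ ^ α‖ := hball (by rw [dist_zero_right]; exact hh.trans_lt hjε)
    _ ≤ j * ‖h‖ ^ α := by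
      rw [Real.norm_of_nonneg (by positivity)]
      gcongr

theorem dist_le_of_mem_holderPiece {f : E → F} {α : ℝ} {j : ℕ} {c x : E} {r : ℝ}
    (hc : c ∈ holderPiece f α j) (hα : 0 ≤ α) (hxc : dist x c ≤ r) (hr : r ≤ 1 / ((j : ℝ) + 1)) :
    dist (f x) (f c) ≤ j * r ^ α := by
  rw [dist_eq_norm] at hxc ⊢
  have hbound := hc (x - c) (hxc.trans hr)
  rw [add_sub_cancel] at hbound
  exact hbound.trans (by gcongr)

theorem ediam_closedBall_le_ofReal (x : E) (r : ℝ) :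
    ediam (closedBall x r) ≤ ENNReal.ofReal (2 * r) :=
  ediam_le_of_forall_dist_le fun y hy z hz =>
    (dist_triangle_right y z x).trans (by linarith [mem_closedBall.1 hy, mem_closedBall.1 hz])

theorem ediam_closedBall_inter_rpow_le_indicator {f : E → F} {α d : ℝ} {j : ℕ} {c : E} {r : ℝ}
    (hd : 0 < d) (hα : 0 ≤ α) (hc : c ∈ holderPiece f α j) (hr : r ≤ 1 / ((j : ℝ) + 1))
    {y : F} {B : Set E} (hB : B ⊆ f ⁻¹' {y}) :
    ediam (closedBall c r ∩ B) ^ d ≤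
      (closedBall (f c) (j * r ^ α)).indicator (fun _ => ENNReal.ofReal (2 * r) ^ d) y := by
  rcases (closedBall c r ∩ B).eq_empty_or_nonempty with hempty | ⟨x, hxc, hxB⟩
  · rw [hempty, ediam_empty, ENNReal.zero_rpow_of_pos hd]
    exact zero_le
  · have hy : y ∈ closedBall (f c) (j * r ^ α) := by
      rw [← hB hxB]
      exact dist_le_of_mem_holderPiece hc hα hxc hr
    rw [indicator_of_mem hy]
    gcongr
    exact (ediam_mono inter_subset_left).trans (ediam_closedBall_le_ofReal c r)

end HolderPiece

theorem exists_closedBall_covering_tsum_measure_le_of_measure_zero {X : Type*} [MetricSpace X]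
    [SecondCountableTopology X] [MeasurableSpace X] [OpensMeasurableSpace X]
    [HasBesicovitchCovering X] (μ : Measure X) [SFinite μ] [μ.OuterRegular] {S : Set X}
    (hS : μ S = 0) {δ : ℝ} (hδ : 0 < δ) {ε : ℝ≥0∞} (hε : ε ≠ 0) :
    ∃ (t : Set X) (r : X → ℝ), t.Countable ∧ t ⊆ S ∧ (∀ x ∈ t, r x ∈ Ioo 0 δ) ∧
      S ⊆ (⋃ x ∈ t, closedBall x (r x)) ∧ ∑' x : t, μ (closedBall x (r x)) ≤ ε := by
  obtain ⟨t, r, ht, htS, hr, hcover, hsum⟩ :=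
    Besicovitch.exists_closedBall_covering_tsum_measure_le μ hε (fun _ => Ioo 0 δ) S
      fun _ _ η hη => by
        rw [Ioo_inter_Ioo, max_self]
        exact nonempty_Ioo.2 (lt_min hδ hη)
  exact ⟨t, r, ht, htS, hr, hcover, by rwa [hS, zero_add] at hsum⟩

theorem ae_eq_zero_of_le_liminf_of_tendsto_lintegral {Ω : Type*} [MeasurableSpace Ω]
    {μ : Measure Ω} {g : ℕ → Ω → ℝ≥0∞} {G : Ω → ℝ≥0∞} (hg : ∀ p, Measurable (g p))
    (hG : ∀ ω, G ω ≤ liminf (fun p => g p ω) atTop)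
    (hlim : Tendsto (fun p => ∫⁻ ω, g p ω ∂μ) atTop (𝓝 0)) : ∀ᵐ ω ∂μ, G ω = 0 := by
  have hzero : ∫⁻ ω, liminf (fun p => g p ω) atTop ∂μ = 0 :=
    nonpos_iff_eq_zero.1 ((lintegral_liminf_le hg).trans hlim.liminf_eq.le)
  filter_upwards [(lintegral_eq_zero_iff (Measurable.liminf hg)).1 hzero] with ω hω
  exact nonpos_iff_eq_zero.1 ((hG ω).trans hω.le)

theorem rpow_mul_mul_rpow_pow_le {r α d c : ℝ} {m n : ℕ} (hr0 : 0 < r) (hr1 : r ≤ 1)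
    (hc : 0 ≤ c) (hdim : (n : ℝ) ≤ d + α * m) :
    (2 * r) ^ d * (c * r ^ α) ^ m ≤ 2 ^ d * c ^ m * r ^ n :=
  calc (2 * r) ^ d * (c * r ^ α) ^ m = 2 ^ d * c ^ m * r ^ (d + α * m) := by
        rw [Real.mul_rpow zero_le_two hr0.le, mul_pow, ← Real.rpow_mul_natCast hr0.le,
          Real.rpow_add hr0]
        ring
    _ ≤ 2 ^ d * c ^ m * r ^ n := by
        rw [← Real.rpow_natCast r n]
        gcongr 2 ^ d * c ^ m * ?_
        exact Real.rpow_le_rpow_of_exponent_ge hr0 hr1 hdim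

section CoverMajorant

variable {E F : Type*} [PseudoMetricSpace F]

noncomputable def holderCoverMajorant (f : E → F) (c α d : ℝ) (t : Set E) (r : E → ℝ) (y : F) :
    ℝ≥0∞ :=
  ∑' x : t, (closedBall (f x) (c * r x ^ α)).indicator (fun _ => ENNReal.ofReal (2 * r x) ^ d) y

theorem measurable_holderCoverMajorant [MeasurableSpace F] [OpensMeasurableSpace F] (f : E → F)
    (c α d : ℝ) {t : Set E} (ht : t.Countable) (r : E → ℝ) :
    Measurable (holderCoverMajorant f c α d t r) :=
  have := ht.to_subtype
  Measurable.tsum fun _ => measurable_const.indicator measurableSet_closedBall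

end CoverMajorant

theorem hausdorffMeasure_inter_preimage_le_liminf_holderCoverMajorant {E F : Type*}
    [NormedAddCommGroup E] [MeasurableSpace E] [BorelSpace E] [SeminormedAddCommGroup F]
    {f : E → F} {α d : ℝ} (hd : 0 < d) (hα : 0 ≤ α) {j : ℕ} {S : Set E} {t : ℕ → Set E}
    {r : ℕ → E → ℝ} (ht : ∀ p, (t p).Countable) (htj : ∀ p, t p ⊆ holderPiece f α j)
    (hrj : ∀ p, ∀ x ∈ t p, r p x ≤ 1 / ((j : ℝ) + 1))
    (hrp : ∀ p, ∀ x ∈ t p, r p x ≤ 1 / ((p : ℝ) + 1))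
    (hcover : ∀ p, S ⊆ ⋃ x ∈ t p, closedBall x (r p x)) (y : F) :
    μH[d] (S ∩ f ⁻¹' {y}) ≤ liminf (fun p => holderCoverMajorant f j α d (t p) (r p) y) atTop := by
  have := fun p => (ht p).to_subtype
  have hdiam : Tendsto (fun p : ℕ => ENNReal.ofReal (2 * (1 / ((p : ℝ) + 1)))) atTop (𝓝 0) := by
    simpa using ENNReal.tendsto_ofReal (tendsto_one_div_add_atTop_nhds_zero_nat.const_mul 2)
  refine (Measure.hausdorffMeasure_le_liminf_tsum d (S ∩ f ⁻¹' {y}) _ hdiam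
    (fun p (x : t p) => closedBall x (r p x) ∩ (S ∩ f ⁻¹' {y})) ?_ ?_).trans
    (liminf_le_liminf (.of_forall fun p => ENNReal.tsum_le_tsum fun x =>
      ediam_closedBall_inter_rpow_le_indicator hd hα (htj p x.2) (hrj p x x.2)
        inter_subset_right))
  · refine .of_forall fun p x => (ediam_mono inter_subset_left).trans
      ((ediam_closedBall_le_ofReal _ _).trans (ENNReal.ofReal_le_ofReal ?_))
    linarith [hrp p x x.2]
  · refine .of_forall fun p z hz => ?_
    obtain ⟨x, hx, hzx⟩ := mem_iUnion₂.1 (hcover p hz.1)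
    exact mem_iUnion.2 ⟨⟨x, hx⟩, hzx, hz⟩

section HaarMeasure

variable {E F : Type*} [NormedAddCommGroup E] [NormedSpace ℝ E] [FiniteDimensional ℝ E]
  [MeasurableSpace E] [BorelSpace E] (μ : Measure E) [μ.IsAddHaarMeasure]
  [NormedAddCommGroup F] [NormedSpace ℝ F] [FiniteDimensional ℝ F]
  [MeasurableSpace F] [BorelSpace F] (ν : Measure F) [ν.IsAddHaarMeasure]

theorem ofReal_rpow_mul_addHaar_closedBall_le {r α d c : ℝ} (hr0 : 0 < r) (hr1 : r ≤ 1)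
    (hc : 0 ≤ c) (hdim : (finrank ℝ E : ℝ) ≤ d + α * finrank ℝ F) (x : E) (y : F) :
    ENNReal.ofReal (2 * r) ^ d * ν (closedBall y (c * r ^ α)) ≤
      ENNReal.ofReal (2 ^ d * c ^ finrank ℝ F) * ν (ball 0 1) / μ (ball 0 1) *
        μ (closedBall x r) := by
  rw [Measure.addHaar_closedBall ν y (by positivity), Measure.addHaar_closedBall μ x hr0.le,
    ENNReal.ofReal_rpow_of_pos (by positivity), ← mul_assoc, ← ENNReal.ofReal_mul (by positivity)]
  calc ENNReal.ofReal ((2 * r) ^ d * (c * r ^ α) ^ finrank ℝ F) * ν (ball 0 1)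
      ≤ ENNReal.ofReal (2 ^ d * c ^ finrank ℝ F * r ^ finrank ℝ E) * ν (ball 0 1) := by
        gcongr ENNReal.ofReal ?_ * _
        exact rpow_mul_mul_rpow_pow_le hr0 hr1 hc hdim
    _ = ENNReal.ofReal (2 ^ d * c ^ finrank ℝ F) * ν (ball 0 1) / μ (ball 0 1) *
        (ENNReal.ofReal (r ^ finrank ℝ E) * μ (ball 0 1)) := by
        rw [ENNReal.ofReal_mul (by positivity), mul_comm (ENNReal.ofReal (r ^ _)), ← mul_assoc,
          ENNReal.div_mul_cancel (measure_ball_pos μ 0 one_pos).ne' measure_ball_lt_top.ne]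
        ring

theorem lintegral_holderCoverMajorant_le (f : E → F) {c α d : ℝ} (hc : 0 ≤ c)
    (hdim : (finrank ℝ E : ℝ) ≤ d + α * finrank ℝ F) {t : Set E} (ht : t.Countable) {r : E → ℝ}
    (hr : ∀ x ∈ t, r x ∈ Ioc 0 1) :
    ∫⁻ y, holderCoverMajorant f c α d t r y ∂ν ≤
      ENNReal.ofReal (2 ^ d * c ^ finrank ℝ F) * ν (ball 0 1) / μ (ball 0 1) *
        ∑' x : t, μ (closedBall x (r x)) := by
  have := ht.to_subtype
  calc ∫⁻ y, holderCoverMajorant f c α d t r y ∂ν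
      = ∑' x : t, ENNReal.ofReal (2 * r x) ^ d * ν (closedBall (f x) (c * r x ^ α)) := by
        simp only [holderCoverMajorant]
        rw [lintegral_tsum fun _ =>
          (measurable_const.indicator measurableSet_closedBall).aemeasurable]
        simp only [lintegral_indicator_const measurableSet_closedBall]
    _ ≤ _ := (ENNReal.tsum_le_tsum fun x : t =>
        ofReal_rpow_mul_addHaar_closedBall_le μ ν (hr x x.2).1 (hr x x.2).2 hc hdim x (f x)).trans
      ENNReal.tsum_mul_left.le

theorem ae_hausdorffMeasure_inter_preimage_eq_zero_of_subset_holderPiece {f : E → F} {α d : ℝ}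
    (hd : 0 < d) (hα : 0 ≤ α) (hdim : (finrank ℝ E : ℝ) ≤ d + α * finrank ℝ F) {j : ℕ}
    {S : Set E} (hSj : S ⊆ holderPiece f α j) (hS : μ S = 0) :
    ∀ᵐ y ∂ν, μH[d] (S ∩ f ⁻¹' {y}) = 0 := by
  have hδ (p : ℕ) : 0 < min (1 / ((j : ℝ) + 1)) (1 / ((p : ℝ) + 1)) := by positivity
  choose t r ht htS hr hcover hsum using fun p : ℕ =>
    exists_closedBall_covering_tsum_measure_le_of_measure_zero μ hS (hδ p)
      (ENNReal.inv_ne_zero.2 (ENNReal.natCast_ne_top p))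
  have hrj (p : ℕ) : ∀ x ∈ t p, r p x ≤ 1 / ((j : ℝ) + 1) :=
    fun x hx => (hr p x hx).2.le.trans (min_le_left _ _)
  have hrp (p : ℕ) : ∀ x ∈ t p, r p x ≤ 1 / ((p : ℝ) + 1) :=
    fun x hx => (hr p x hx).2.le.trans (min_le_right _ _)
  refine ae_eq_zero_of_le_liminf_of_tendsto_lintegral
    (fun p => measurable_holderCoverMajorant f j α d (ht p) (r p))
    (hausdorffMeasure_inter_preimage_le_liminf_holderCoverMajorant hd hα ht
      (fun p => (htS p).trans hSj) hrj hrp hcover) ?_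
  set K := ENNReal.ofReal (2 ^ d * (j : ℝ) ^ finrank ℝ F) * ν (ball 0 1) / μ (ball 0 1)
  have hK : K ≠ ⊤ := ENNReal.div_ne_top (ENNReal.mul_ne_top ENNReal.ofReal_ne_top
    measure_ball_lt_top.ne) (measure_ball_pos μ 0 one_pos).ne'
  refine tendsto_of_tendsto_of_tendsto_of_le_of_le tendsto_const_nhds
    (by simpa using ENNReal.Tendsto.const_mul ENNReal.tendsto_inv_nat_nhds_zero (.inr hK))
    (fun _ => zero_le) fun p => ?_
  have hr1 : ∀ x ∈ t p, r p x ∈ Ioc 0 1 := fun x hx =>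
    ⟨(hr p x hx).1, (hrp p x hx).trans (div_le_one_of_le₀ (by simp) (by positivity))⟩
  exact (lintegral_holderCoverMajorant_le μ ν f j.cast_nonneg hdim (ht p) hr1).trans
    (by gcongr; exact hsum p)

theorem ae_hausdorffMeasure_inter_preimage_eq_zero {f : E → F} {α d : ℝ} (hd : 0 < d)
    (hα : 0 ≤ α) (hdim : (finrank ℝ E : ℝ) ≤ d + α * finrank ℝ F) {N : Set E}
    (hN : N ⊆ {x | (fun h => f (x + h) - f x) =O[𝓝 0] fun h => ‖h‖ ^ α}) (hN0 : μ N = 0) :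
    ∀ᵐ y ∂ν, μH[d] (N ∩ f ⁻¹' {y}) = 0 := by
  have hpieces (j : ℕ) : ∀ᵐ y ∂ν, μH[d] (N ∩ holderPiece f α j ∩ f ⁻¹' {y}) = 0 :=
    ae_hausdorffMeasure_inter_preimage_eq_zero_of_subset_holderPiece μ ν hd hα hdim
      inter_subset_right (measure_mono_null inter_subset_left hN0)
  filter_upwards [ae_all_iff.2 hpieces] with y hy
  refine measure_mono_null (fun x hx => ?_) (measure_iUnion_null hy)
  obtain ⟨j, hj⟩ := mem_iUnion.1 (setOf_isBigO_subset_iUnion_holderPiece f α (hN hx.1))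
  exact mem_iUnion.2 ⟨j, ⟨hx.1, hj⟩, hx.2⟩

end HaarMeasure

theorem pointwise_holder_null_fibers_general
    (n m : ℕ) (hm : 0 < m) (k : ℕ) (hk1 : 1 ≤ k)
    (ℓ : ℕ) (hℓ : ℓ = n - m - k + 1)
    (f : (Fin n → ℝ) → (Fin m → ℝ)) (N : Set (Fin n → ℝ))
    (hN : N ⊆ {x | (fun h => f (x + h) - f x) =O[nhds 0] fun h => ‖h‖ ^ k})
    (hNnull : volume N = 0) :
    ∀ᵐ y : Fin m → ℝ, μH[(ℓ : ℝ)] (N ∩ f ⁻¹' {y}) = 0 := by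
  have hkm : k + m ≤ k * m + 1 := by nlinarith
  have hdim : (n : ℝ) ≤ ℓ + k * m := by exact_mod_cast (by omega : n ≤ ℓ + k * m)
  refine ae_hausdorffMeasure_inter_preimage_eq_zero volume volume (Nat.cast_pos.2 (by omega))
    k.cast_nonneg (by simpa only [finrank_fin_fun] using hdim) ?_ hNnull
  simpa only [Real.rpow_natCast] using hN

theorem pointwise_holder_null_fibers
    (n m : ℕ) (hm : 0 < m) (hnm : m ≤ n) (k : ℕ) (hk1 : 1 ≤ k) (hk2 : k ≤ n - m + 1)
    (ℓ : ℕ) (hℓ : ℓ = n - m - k + 1)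
    (f : (Fin n → ℝ) → (Fin m → ℝ)) (N : Set (Fin n → ℝ))
    (hN : N ⊆ {x | (fun h => f (x + h) - f x) =O[nhds 0] fun h => ‖h‖ ^ k})
    (hNnull : volume N = 0) :
    ∀ᵐ y : Fin m → ℝ, μH[(ℓ : ℝ)] (N ∩ f ⁻¹' {y}) = 0 :=
  pointwise_holder_null_fibers_general n m hm k hk1 ℓ hℓ f N hN hNnull
end
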